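/- arXiv:2510.24608 — 11 statements merged into one kernel-verified Lean document; each statement's English description precedes it below -/
import Mathlib

section
/- Let n := gcd{ j ∈ {2,…,m} : p_j > 0 }. Then for t ∈ [0, 2π), the derivative of the curve satisfies γ'(t) = 0 if and only if t = 2πk/n for some k ∈ {0, 1, …, n−1}. -/
/-!
With `ζ = e^{-it}` one has `γ'(t) = i e^{it} ∑ⱼ (1 - j) pⱼ ζʲ`. Subtracting the mean-zero condition
from the real part of this sum leaves `∑ⱼ (j - 1) pⱼ (1 - Re ζʲ)`, whose terms are all nonnegative
because `|ζ| = 1`. Hence `γ'(t) = 0` exactly when `ζʲ = 1` for every `j ≥ 2` with `pⱼ > 0`, that is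
when the order of `ζ` divides `n`, that is when `nt ∈ 2πℤ`. The mean-zero condition and `p₀ > 0`
force some such `j` to exist, so `n ≠ 0`.
-/

open Complex Real

theorem Finset.pow_gcd_eq_one {ι M : Type*} [Monoid M] (x : M) (s : Finset ι) (f : ι → ℕ) :
    x ^ s.gcd f = 1 ↔ ∀ i ∈ s, x ^ f i = 1 := by
  simp only [← orderOf_dvd_iff_pow_eq_one, Finset.dvd_gcd_iff]

theorem Complex.eq_one_of_re_eq_one {z : ℂ} (hz : ‖z‖ ≤ 1) (hre : z.re = 1) : z = 1 := by
  have him : z.im = 0 :=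
    abs_re_eq_norm.1 (le_antisymm (abs_re_le_norm z) (by rw [hre, abs_one]; exact hz))
  exact Complex.ext hre him

theorem exp_mul_I_pow_eq_one_iff {n : ℕ} (hn : n ≠ 0) {t : ℝ} (ht : t ∈ Set.Ico 0 (2 * π)) :
    cexp (t * I) ^ n = 1 ↔ ∃ k < n, t = 2 * π * k / n := by
  rw [← Complex.exp_nat_mul, Complex.exp_eq_one_iff]
  constructor
  · rintro ⟨k, hk⟩
    have hk' : n * t = k * (2 * π) := by simpa using congrArg im hk
    have hk0 : 0 ≤ k := by
      have : (0 : ℝ) ≤ k * (2 * π) := hk' ▸ by positivity [ht.1]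
      exact_mod_cast nonneg_of_mul_nonneg_left this (by positivity)
    lift k to ℕ using hk0
    push_cast at hk'
    refine ⟨k, ?_, ?_⟩
    · have : (k : ℝ) * (2 * π) < n * (2 * π) :=
        hk' ▸ mul_lt_mul_of_pos_left ht.2 (by positivity)
      exact_mod_cast lt_of_mul_lt_mul_right this (by positivity)
    · field_simp
      linarith
  · rintro ⟨k, -, rfl⟩
    refine ⟨k, ?_⟩
    push_cast
    field_simp

section MeanZero

variable {s : Finset ℕ} {p : ℕ → ℝ}

theorem exists_two_le_pos_of_sum_one_sub_mul_eq_zero (hp : ∀ j, 0 ≤ p j) (hp0 : 0 < p 0)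
    (h0 : 0 ∈ s) (hmean : ∑ j ∈ s, (1 - (j : ℝ)) * p j = 0) : ∃ j ∈ s, 2 ≤ j ∧ 0 < p j := by
  by_contra! h
  have : ∑ j ∈ s, (1 - (j : ℝ)) * p j = p 0 := by
    rw [Finset.sum_eq_single_of_mem 0 h0]
    · simp
    intro j hj hj0
    obtain rfl | hj2 : j = 1 ∨ 2 ≤ j := by omega
    · simp
    · simp [le_antisymm (h j hj hj2) (hp j)]
  linarith

theorem sum_one_sub_mul_pow_eq_zero_iff (hp : ∀ j, 0 ≤ p j)
    (hmean : ∑ j ∈ s, (1 - (j : ℝ)) * p j = 0) {ζ : ℂ} (hζ : ‖ζ‖ = 1) :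
    ∑ j ∈ s, (1 - (j : ℂ)) * p j * ζ ^ j = 0 ↔ ∀ j ∈ s, 2 ≤ j → 0 < p j → ζ ^ j = 1 := by
  have hre_le (j : ℕ) : (ζ ^ j).re ≤ 1 := by
    simpa [hζ] using re_le_norm (ζ ^ j)
  constructor
  · intro hsum
    have hdefect : ∑ j ∈ s, ((j : ℝ) - 1) * p j * (1 - (ζ ^ j).re) = 0 := by
      have hre := congrArg Complex.re hsum
      simp only [Complex.re_sum, Complex.zero_re, ← ofReal_natCast, ← ofReal_one, ← ofReal_sub,
        ← ofReal_mul, re_ofReal_mul] at hre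
      have hsplit : ∑ j ∈ s, ((j : ℝ) - 1) * p j * (1 - (ζ ^ j).re) =
          ∑ j ∈ s, (1 - (j : ℝ)) * p j * (ζ ^ j).re - ∑ j ∈ s, (1 - (j : ℝ)) * p j := by
        rw [← Finset.sum_sub_distrib]
        exact Finset.sum_congr rfl fun j _ => by ring
      rw [hsplit, hre, hmean, sub_zero]
    have hzero := (Finset.sum_eq_zero_iff_of_nonneg fun j _ => ?_).1 hdefect
    · intro j hj hj2 hpj
      refine Complex.eq_one_of_re_eq_one (by simp [hζ]) ?_
      have hj2' : (2 : ℝ) ≤ j := by exact_mod_cast hj2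
      have : (0 : ℝ) < (j - 1) * p j := mul_pos (by linarith) hpj
      nlinarith [hzero j hj]
    · obtain rfl | hj : j = 0 ∨ 1 ≤ j := by omega
      · simp
      · have : (1 : ℝ) ≤ j := by exact_mod_cast hj
        exact mul_nonneg (mul_nonneg (by linarith) (hp j)) (by linarith [hre_le j])
  · intro h
    have hterm (j : ℕ) (hj : j ∈ s) : (1 - (j : ℂ)) * p j * ζ ^ j = ((1 - (j : ℝ)) * p j : ℝ) := by
      obtain rfl | rfl | hj2 : j = 0 ∨ j = 1 ∨ 2 ≤ j := by omega
      · simp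
      · simp
      obtain hpj | hpj := (hp j).eq_or_lt
      · simp [← hpj]
      · simp [h j hj hj2 hpj]
    rw [Finset.sum_congr rfl hterm, ← Complex.ofReal_sum, hmean, Complex.ofReal_zero]

end MeanZero

theorem hasDerivAt_sum_mul_exp (s : Finset ℕ) (c : ℕ → ℂ) (t : ℝ) :
    HasDerivAt (fun x : ℝ => ∑ j ∈ s, c j * cexp (I * (1 - j) * x))
      (I * cexp (t * I) * ∑ j ∈ s, (1 - (j : ℂ)) * c j * cexp (-(t * I)) ^ j) t := by
  rw [Finset.mul_sum]
  refine HasDerivAt.fun_sum fun j _ => ?_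
  have := (((hasDerivAt_id (t : ℂ)).const_mul (I * (1 - j))).cexp.const_mul (c j)).comp_ofReal
  refine this.congr_deriv ?_
  rw [← Complex.exp_nat_mul, show I * (1 - j) * id (t : ℂ) = t * I + j * -(t * I) by rw [id]; ring,
    Complex.exp_add]
  ring

theorem stmt_0_general
    (m : ℕ)
    (p : ℕ → ℝ)
    (hp_nonneg : ∀ j, 0 ≤ p j)
    (hp0 : 0 < p 0)
    (hmean : ∑ j ∈ Finset.range (m + 1), (1 - (j : ℝ)) * p j = 0)
    (γ : ℝ → ℂ)
    (hγ : ∀ t : ℝ, γ t = ∑ j ∈ Finset.range (m + 1),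
      (p j : ℂ) * Complex.exp (Complex.I * (1 - (j : ℂ)) * (t : ℂ)))
    (n : ℕ)
    (hn : n = ((Finset.Icc 2 m).filter (fun j => 0 < p j)).gcd id)
    (t : ℝ) (ht : t ∈ Set.Ico 0 (2 * Real.pi)) :
    deriv γ t = 0 ↔ ∃ k, k < n ∧ t = 2 * Real.pi * k / n := by
  have hS (j : ℕ) : j ∈ (Finset.Icc 2 m).filter (fun j => 0 < p j) ↔
      j ∈ Finset.range (m + 1) ∧ 2 ≤ j ∧ 0 < p j := by
    simp only [Finset.mem_filter, Finset.mem_Icc, Finset.mem_range, Nat.lt_succ_iff]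
    tauto
  have hn0 : n ≠ 0 := by
    obtain ⟨j, hj, hj2, hpj⟩ :=
      exists_two_le_pos_of_sum_one_sub_mul_eq_zero hp_nonneg hp0 (by simp) hmean
    rw [hn, Ne, Finset.gcd_eq_zero_iff, not_forall]
    exact ⟨j, fun h => absurd (h ((hS j).2 ⟨hj, hj2, hpj⟩)) (by simp only [id]; omega)⟩
  have hderiv := (funext hγ ▸ hasDerivAt_sum_mul_exp (Finset.range (m + 1)) (fun j => p j) t).deriv
  have hζ : ‖cexp (-(t * I))‖ = 1 := by
    rw [← neg_mul, ← ofReal_neg, norm_exp_ofReal_mul_I]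
  have hζn : cexp (-(t * I)) ^ n = 1 ↔ ∃ k < n, t = 2 * π * k / n := by
    rw [Complex.exp_neg, inv_pow, inv_eq_one]
    exact exp_mul_I_pow_eq_one_iff hn0 ht
  rw [hderiv, mul_eq_zero, or_iff_right (mul_ne_zero I_ne_zero (Complex.exp_ne_zero _)),
    sum_one_sub_mul_pow_eq_zero_iff hp_nonneg hmean hζ, ← hζn, hn, Finset.pow_gcd_eq_one]
  simp only [hS, id, and_imp]

/-- Let n := gcd{ j ∈ {2,…,m} : p_j > 0 }. Then for t ∈ [0, 2π), the
derivative of the curve γ(t) = Σ_{j=0}^m p_j e^{i(1−j)t} satisfies γ'(t) = 0 if and only if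
t = 2πk/n for some k ∈ {0, 1, …, n−1}. -/
theorem stmt_0
    (m : ℕ) (hm : 2 ≤ m)
    (p : ℕ → ℝ)
    (hp_nonneg : ∀ j, 0 ≤ p j)
    (hp_sum : ∑ j ∈ Finset.range (m + 1), p j = 1)
    (hp0 : 0 < p 0)
    (hp1 : p 1 = 0)
    (hmean : ∑ j ∈ Finset.range (m + 1), (1 - (j : ℝ)) * p j = 0)
    (γ : ℝ → ℂ)
    (hγ : ∀ t : ℝ, γ t = ∑ j ∈ Finset.range (m + 1),
      (p j : ℂ) * Complex.exp (Complex.I * (1 - (j : ℂ)) * (t : ℂ)))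
    (n : ℕ)
    (hn : n = ((Finset.Icc 2 m).filter (fun j => 0 < p j)).gcd id)
    (t : ℝ) (ht : t ∈ Set.Ico 0 (2 * Real.pi)) :
    deriv γ t = 0 ↔ ∃ k, k < n ∧ t = 2 * Real.pi * k / n :=
  stmt_0_general m p hp_nonneg hp0 hmean γ hγ n hn t ht
end

section
/- The stability region Γ is radially convex (star-shaped with respect to the origin): 0 ∈ Γ, and for every z ∈ Γ and every s ∈ [0, 1], the point s·z belongs to Γ. -/
/-!
Put `f w = ∑ p_j w^j`, so that `ψ (1 / w) = f w / w`. The complement of `Γ` is then the image of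
the punctured unit disc under `f w / w`, and `Γ` is star-shaped about `0` as soon as
`g w = w / f w` maps the disc onto a domain star-shaped about `0`. This is the classical
starlikeness criterion `Re (w g' / g) = Re ((f - w f') / f) > 0`: it makes the argument of `g`
strictly increasing along every circle `|w| = r`, so on each circle exactly one point is sent into
a given direction, this point moves continuously with `r`, and the intermediate value theorem for
`|g|` along these points reaches the whole segment from `0` to any value of `g`.

The criterion comes from the mean-zero condition, which gives `p_0 = ∑_{j ≥ 2} (j - 1) p_j` and
`f - w f' = ∑_{j ≥ 2} (j - 1) p_j (1 - w^j)`: expanding `Re ((f - w f') conj f)` as a double sum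
over `j, k ≥ 2`, each symmetrised pair of terms is at least `2 (1 - |w|²)` times the product of the
weights `(j - 1) p_j` and `(k - 1) p_k`.
-/

open Complex ComplexConjugate Metric Set Filter Topology Real Function

lemma continuousOn_of_strictMono_of_apply_eq {F : ℝ → ℝ → ℝ} {s : Set ℝ} {τ : ℝ → ℝ} {α : ℝ}
    (hmono : ∀ r ∈ s, StrictMono (F r)) (hcont : ∀ t, ContinuousOn (fun r ↦ F r t) s)
    (hτ : ∀ r ∈ s, F r (τ r) = α) : ContinuousOn τ s := by
  intro r hr
  refine tendsto_order.2 ⟨fun a ha ↦ ?_, fun b hb ↦ ?_⟩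
  · have hlt : F r a < α := hτ r hr ▸ hmono r hr ha
    filter_upwards [(hcont a r hr).eventually_lt_const hlt, self_mem_nhdsWithin] with x hx hxs
    exact (hmono x hxs).lt_iff_lt.1 (hτ x hxs ▸ hx)
  · have hlt : α < F r b := hτ r hr ▸ hmono r hr hb
    filter_upwards [(hcont b r hr).eventually_const_lt hlt, self_mem_nhdsWithin] with x hx hxs
    exact (hmono x hxs).lt_iff_lt.1 (hτ x hxs ▸ hx)

lemma exists_mem_Ioc_eq_of_le_mul {M : ℝ → ℝ} {K a y : ℝ} (ha : 0 < a)
    (hM : ContinuousOn M (Ioc 0 a)) (hK : ∀ r ∈ Ioc 0 a, M r ≤ K * r) (hy : 0 < y)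
    (hya : y ≤ M a) : ∃ r ∈ Ioc 0 a, M r = y := by
  have hK0 : 0 < K := pos_of_mul_pos_left (hy.trans_le (hya.trans (hK a ⟨ha, le_rfl⟩))) ha.le
  set b := min a (y / K)
  have hb : b ∈ Ioc 0 a := ⟨lt_min ha (div_pos hy hK0), min_le_left _ _⟩
  have hMb : M b ≤ y := calc
    M b ≤ K * b := hK b hb
    _ ≤ K * (y / K) := by gcongr; exact min_le_right _ _
    _ = y := mul_div_cancel₀ _ hK0.ne'
  obtain ⟨r, hr, hMr⟩ := intermediate_value_Icc hb.2
    (hM.mono fun x hx ↦ ⟨hb.1.trans_le hx.1, hx.2⟩) ⟨hMb, hya⟩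
  exact ⟨r, ⟨hb.1.trans_le hr.1, hr.2⟩, hMr⟩

lemma circleMap_mem_ball_one {r : ℝ} (hr : r ∈ Ioo 0 1) (t : ℝ) :
    circleMap 0 r t ∈ ball (0 : ℂ) 1 := by
  rw [mem_ball_zero_iff, norm_circleMap_zero, abs_of_pos hr.1]
  exact hr.2

section Starlike

variable {f f' : ℂ → ℂ}

/-- Along the circle `|w| = r`, a continuous choice of `arg (w / f w)` when `f` avoids the slit. -/
noncomputable def argLift (f : ℂ → ℂ) (r t : ℝ) : ℝ := t - arg (f (circleMap 0 r t))

lemma abs_argLift_sub_le (f : ℂ → ℂ) (r t : ℝ) : |argLift f r t - t| ≤ π := by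
  rw [argLift, sub_sub_cancel_left, abs_neg]
  exact abs_arg_le_pi _

lemma circleMap_div_eq_polar (r t : ℝ) (hf : f (circleMap 0 r t) ≠ 0) :
    circleMap 0 r t / f (circleMap 0 r t) =
      ↑(r / ‖f (circleMap 0 r t)‖) * exp (argLift f r t * I) := by
  rw [argLift]
  set ζ := f (circleMap 0 r t)
  have hζ : (‖ζ‖ : ℂ) ≠ 0 := by simpa using hf
  rw [div_eq_iff hf]
  conv_rhs => arg 2; rw [← norm_mul_exp_arg_mul_I ζ]
  rw [circleMap_zero, ofReal_div, ofReal_sub, sub_mul, Complex.exp_sub]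
  field_simp

lemma hasDerivAt_argLift (hf : ∀ w ∈ ball (0 : ℂ) 1, HasDerivAt f (f' w) w)
    (hslit : ∀ w ∈ ball (0 : ℂ) 1, f w ∈ slitPlane) {r : ℝ} (hr : r ∈ Ioo 0 1) (t : ℝ) :
    HasDerivAt (argLift f r)
      (((f (circleMap 0 r t) - circleMap 0 r t * f' (circleMap 0 r t)) /
        f (circleMap 0 r t)).re) t := by
  set w := circleMap 0 r t
  have hw := circleMap_mem_ball_one hr t
  have hlog : HasDerivAt (fun u ↦ log (f (circleMap 0 r u))) (f' w * (w * I) / f w) t :=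
    ((hf w hw).comp t (hasDerivAt_circleMap 0 r t)).clog_real (hslit w hw)
  have harg : argLift f r = fun u ↦ u - (log (f (circleMap 0 r u))).im := by
    ext u; rw [argLift, log_im]
  rw [harg]
  refine ((hasDerivAt_id t).sub (imCLM.hasFDerivAt.comp_hasDerivAt t hlog)).congr_deriv ?_
  rw [imCLM_apply, show f' w * (w * I) / f w = w * f' w / f w * I by ring, mul_I_im, sub_div,
    div_self (slitPlane_ne_zero (hslit w hw)), sub_re, one_re]

lemma strictMono_argLift (hf : ∀ w ∈ ball (0 : ℂ) 1, HasDerivAt f (f' w) w)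
    (hslit : ∀ w ∈ ball (0 : ℂ) 1, f w ∈ slitPlane)
    (hstar : ∀ w ∈ ball (0 : ℂ) 1, 0 < ((f w - w * f' w) / f w).re) {r : ℝ}
    (hr : r ∈ Ioo 0 1) : StrictMono (argLift f r) :=
  strictMono_of_hasDerivAt_pos (hasDerivAt_argLift hf hslit hr)
    fun t ↦ hstar _ (circleMap_mem_ball_one hr t)

lemma surjective_argLift (hf : ∀ w ∈ ball (0 : ℂ) 1, HasDerivAt f (f' w) w)
    (hslit : ∀ w ∈ ball (0 : ℂ) 1, f w ∈ slitPlane) {r : ℝ} (hr : r ∈ Ioo 0 1) :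
    Surjective (argLift f r) := by
  intro α
  have hcont : Continuous (argLift f r) :=
    continuous_iff_continuousAt.2 fun t ↦ (hasDerivAt_argLift hf hslit hr t).continuousAt
  have hlo := (abs_le.1 (abs_argLift_sub_le f r (α - π))).2
  have hhi := (abs_le.1 (abs_argLift_sub_le f r (α + π))).1
  obtain ⟨t, -, ht⟩ := intermediate_value_Icc (by linarith [pi_pos] : α - π ≤ α + π)
    hcont.continuousOn (show α ∈ Icc _ _ from ⟨by linarith, by linarith⟩)
  exact ⟨t, ht⟩

lemma continuousOn_argLift_radius (hf : ∀ w ∈ ball (0 : ℂ) 1, HasDerivAt f (f' w) w)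
    (hslit : ∀ w ∈ ball (0 : ℂ) 1, f w ∈ slitPlane) (t : ℝ) :
    ContinuousOn (fun r ↦ argLift f r t) (Ioo 0 1) := by
  intro r hr
  have hw := circleMap_mem_ball_one hr t
  have hc : ContinuousAt (fun r : ℝ ↦ circleMap 0 r t) r := by fun_prop
  have hfc : ContinuousAt (f ∘ fun r : ℝ ↦ circleMap 0 r t) r :=
    (hf _ hw).continuousAt.comp (x := r) hc
  have harg : ContinuousAt (arg ∘ f ∘ fun r : ℝ ↦ circleMap 0 r t) r :=
    (continuousAt_arg (hslit _ hw)).comp (x := r) hfc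
  exact (continuousAt_const.fun_sub harg).continuousWithinAt

theorem exists_mul_div_eq_of_starlike (hf : ∀ w ∈ ball (0 : ℂ) 1, HasDerivAt f (f' w) w)
    (hslit : ∀ w ∈ ball (0 : ℂ) 1, f w ∈ slitPlane)
    (hstar : ∀ w ∈ ball (0 : ℂ) 1, 0 < ((f w - w * f' w) / f w).re) {w₁ : ℂ}
    (hw₁ : w₁ ∈ ball (0 : ℂ) 1) (hw₁0 : w₁ ≠ 0) {σ : ℝ} (hσ : σ ∈ Ioc 0 1) :
    ∃ w ∈ ball (0 : ℂ) 1, w ≠ 0 ∧ σ * (f w / w) = f w₁ / w₁ := by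
  set r₁ := ‖w₁‖
  have hr₁ : r₁ ∈ Ioo 0 1 := ⟨norm_pos_iff.2 hw₁0, mem_ball_zero_iff.1 hw₁⟩
  have hf0 : ∀ w ∈ ball (0 : ℂ) 1, f w ≠ 0 := fun w hw ↦ slitPlane_ne_zero (hslit w hw)
  set α := argLift f r₁ (arg w₁)
  -- `circleMap 0 r (τ r)` is the point of the circle `|w| = r` where `w / f w` points in the
  -- direction of `w₁ / f w₁`
  choose! τ hτ using fun r (hr : r ∈ Ioo (0 : ℝ) 1) ↦ surjective_argLift hf hslit hr α
  have hτ₁ : circleMap 0 r₁ (τ r₁) = w₁ := by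
    rw [(strictMono_argLift hf hslit hstar hr₁).injective (hτ r₁ hr₁), circleMap_zero,
      norm_mul_exp_arg_mul_I]
  set M : ℝ → ℝ := fun r ↦ r / ‖f (circleMap 0 r (τ r))‖
  have hpolar : ∀ r ∈ Ioo (0 : ℝ) 1,
      circleMap 0 r (τ r) / f (circleMap 0 r (τ r)) = M r * exp (α * I) := fun r hr ↦ by
    rw [circleMap_div_eq_polar _ _ (hf0 _ (circleMap_mem_ball_one hr _)), hτ r hr]
  have hτc : ContinuousOn τ (Ioo 0 1) := continuousOn_of_strictMono_of_apply_eq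
    (fun r hr ↦ strictMono_argLift hf hslit hstar hr) (continuousOn_argLift_radius hf hslit) hτ
  have hM : ContinuousOn M (Ioo 0 1) := by
    have hw : ContinuousOn (fun r ↦ circleMap 0 r (τ r)) (Ioo 0 1) :=
      circleMap.continuous.comp_continuousOn (continuousOn_id.prodMk hτc)
    have hfw : ContinuousOn (fun r ↦ f (circleMap 0 r (τ r))) (Ioo 0 1) :=
      ContinuousOn.comp (fun w hw ↦ (hf w hw).continuousAt.continuousWithinAt) hw
        fun r hr ↦ circleMap_mem_ball_one hr _
    exact continuousOn_id.div hfw.norm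
      fun r hr ↦ norm_ne_zero_iff.2 (hf0 _ (circleMap_mem_ball_one hr _))
  obtain ⟨c, hc, hfc⟩ : ∃ c > 0, ∀ w ∈ closedBall (0 : ℂ) r₁, c ≤ ‖f w‖ := by
    have hsub : closedBall (0 : ℂ) r₁ ⊆ ball 0 1 := closedBall_subset_ball hr₁.2
    obtain ⟨w, hw, hmin⟩ := (isCompact_closedBall (0 : ℂ) r₁).exists_isMinOn
      (nonempty_closedBall.2 hr₁.1.le)
      fun w hw ↦ (hf w (hsub hw)).continuousAt.norm.continuousWithinAt
    exact ⟨‖f w‖, norm_pos_iff.2 (hf0 w (hsub hw)), hmin⟩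
  have hIoc : Ioc 0 r₁ ⊆ Ioo 0 1 := fun r hr ↦ ⟨hr.1, hr.2.trans_lt hr₁.2⟩
  have hMle : ∀ r ∈ Ioc 0 r₁, M r ≤ c⁻¹ * r := fun r hr ↦ by
    rw [← div_eq_inv_mul]
    refine div_le_div_of_nonneg_left hr.1.le hc (hfc _ ?_)
    rw [mem_closedBall_zero_iff, norm_circleMap_zero, abs_of_pos hr.1]
    exact hr.2
  have hM₁ : 0 < M r₁ := div_pos hr₁.1 (norm_pos_iff.2 (hf0 _ (circleMap_mem_ball_one hr₁ _)))
  obtain ⟨r, hr, hMr⟩ := exists_mem_Ioc_eq_of_le_mul hr₁.1 (hM.mono hIoc) hMle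
    (mul_pos hσ.1 hM₁) (mul_le_of_le_one_left hM₁.le hσ.2)
  have hdiv : circleMap 0 r (τ r) / f (circleMap 0 r (τ r)) = σ * (w₁ / f w₁) := by
    rw [hpolar r (hIoc hr), hMr, ofReal_mul, mul_assoc, ← hpolar r₁ hr₁, hτ₁]
  refine ⟨circleMap 0 r (τ r), circleMap_mem_ball_one (hIoc hr) _, ?_, ?_⟩
  · rw [← norm_ne_zero_iff, norm_circleMap_zero, abs_of_pos hr.1]
    exact hr.1.ne'
  · rw [← inv_div, hdiv, mul_inv, inv_div, ← mul_assoc, mul_inv_cancel₀ (ofReal_ne_zero.2 hσ.1.ne'),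
      one_mul]

end Starlike

lemma re_div_pos_of_re_mul_conj_pos {a b : ℂ} (h : 0 < (a * conj b).re) : 0 < (a / b).re := by
  have hb : b ≠ 0 := by rintro rfl; simp at h
  rw [div_re, ← add_div]
  exact div_pos (by simpa [mul_re] using h) (normSq_pos.2 hb)

-- The symmetrised `(j, k)` and `(k, j)` terms of `Re ((f - w f') conj f)`, with `q = (j - 1) p_j`,
-- `t = p_j` and `A = w ^ j`.
lemma le_re_add_re_of_norm_le {q₁ q₂ t₁ t₂ u : ℝ} {A B : ℂ} (ht₁ : 0 ≤ t₁) (htq₁ : t₁ ≤ q₁)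
    (ht₂ : 0 ≤ t₂) (htq₂ : t₂ ≤ q₂) (hu : u ≤ 1) (hA : ‖A‖ ≤ u) (hB : ‖B‖ ≤ u) :
    2 * (1 - u) * (q₁ * q₂) ≤
      (q₁ * (1 - A) * (q₂ + t₂ * conj B)).re + (q₂ * (1 - B) * (q₁ + t₁ * conj A)).re := by
  have hx : A.re ≤ u := (re_le_norm A).trans hA
  have hy : B.re ≤ u := (re_le_norm B).trans hB
  have hAB : A.re * B.re + A.im * B.im ≤ u := by
    have h := re_le_norm (A * conj B)
    rw [norm_mul, norm_conj] at h
    have : ‖A‖ * ‖B‖ ≤ u := by nlinarith [norm_nonneg A, norm_nonneg B]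
    simp only [mul_re, conj_re, conj_im] at h
    linarith
  simp only [mul_re, mul_im, sub_re, sub_im, add_re, add_im, one_re, one_im, ofReal_re,
    ofReal_im, conj_re, conj_im]
  nlinarith [mul_nonneg (mul_nonneg (ht₂.trans htq₂) (sub_nonneg.2 htq₁)) (sub_nonneg.2 hx),
    mul_nonneg (mul_nonneg (ht₁.trans htq₁) (sub_nonneg.2 htq₂)) (sub_nonneg.2 hy),
    mul_nonneg (add_nonneg (mul_nonneg (ht₁.trans htq₁) ht₂) (mul_nonneg (ht₂.trans htq₂) ht₁))
      (sub_nonneg.2 hAB)]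

lemma mul_sq_sum_le_sum_sum {ι : Type*} (s : Finset ι) (c : ι → ℝ) (G : ι → ι → ℝ) (ε : ℝ)
    (h : ∀ j ∈ s, ∀ k ∈ s, 2 * ε * (c j * c k) ≤ G j k + G k j) :
    ε * (∑ j ∈ s, c j) ^ 2 ≤ ∑ j ∈ s, ∑ k ∈ s, G j k := by
  have hsum := Finset.sum_le_sum fun j hj ↦ Finset.sum_le_sum fun k hk ↦ h j hj k hk
  have hL : ∑ j ∈ s, ∑ k ∈ s, 2 * ε * (c j * c k) = 2 * ε * (∑ j ∈ s, c j) ^ 2 := by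
    simp_rw [sq, Finset.sum_mul_sum, Finset.mul_sum]
  have hR : ∑ j ∈ s, ∑ k ∈ s, G k j = ∑ j ∈ s, ∑ k ∈ s, G j k := Finset.sum_comm
  simp only [Finset.sum_add_distrib, hL, hR] at hsum
  linarith

section GeneratingFunction

variable {m : ℕ} {p : ℕ → ℝ}

def pgf (m : ℕ) (p : ℕ → ℝ) (w : ℂ) : ℂ := ∑ j ∈ Finset.range (m + 1), (p j : ℂ) * w ^ j

def pgfDeriv (m : ℕ) (p : ℕ → ℝ) (w : ℂ) : ℂ :=
  ∑ j ∈ Finset.range (m + 1), (p j : ℂ) * (j * w ^ (j - 1))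

lemma hasDerivAt_pgf (w : ℂ) : HasDerivAt (pgf m p) (pgfDeriv m p w) w :=
  HasDerivAt.fun_sum fun j _ ↦ (hasDerivAt_pow j w).const_mul _

lemma forall_ne_sum_mul_zpow_iff {z : ℂ} :
    (∀ r : ℂ, 1 < ‖r‖ → z ≠ ∑ j ∈ Finset.range (m + 1), (p j : ℂ) * r ^ ((1 : ℤ) - (j : ℤ))) ↔
      ∀ w ∈ ball (0 : ℂ) 1, w ≠ 0 → z ≠ pgf m p w / w := by
  have hψ : ∀ w : ℂ, w ≠ 0 →
      ∑ j ∈ Finset.range (m + 1), (p j : ℂ) * w⁻¹ ^ ((1 : ℤ) - j) = pgf m p w / w := by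
    intro w hw
    rw [pgf, Finset.sum_div]
    refine Finset.sum_congr rfl fun j _ ↦ ?_
    rw [inv_zpow', neg_sub, zpow_sub₀ hw, zpow_natCast, zpow_one, mul_div_assoc]
  refine ⟨fun h w hw hw0 ↦ ?_, fun h r hr ↦ ?_⟩
  · have hw' : 1 < ‖w⁻¹‖ := by
      rw [norm_inv]
      exact (one_lt_inv₀ (norm_pos_iff.2 hw0)).2 (mem_ball_zero_iff.1 hw)
    simpa only [hψ w hw0] using h w⁻¹ hw'
  · have hr0 : r ≠ 0 := norm_pos_iff.1 (one_pos.trans hr)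
    have hr' : r⁻¹ ∈ ball (0 : ℂ) 1 := by
      rw [mem_ball_zero_iff, norm_inv]
      exact inv_lt_one_of_one_lt₀ hr
    simpa only [← hψ r⁻¹ (inv_ne_zero hr0), inv_inv] using h r⁻¹ hr' (inv_ne_zero hr0)

def momentWeight (p : ℕ → ℝ) (j : ℕ) : ℝ := if 2 ≤ j then ((j : ℝ) - 1) * p j else 0

def tailWeight (p : ℕ → ℝ) (j : ℕ) : ℝ := if 2 ≤ j then p j else 0

lemma tailWeight_nonneg (hp : ∀ j, 0 ≤ p j) (j : ℕ) : 0 ≤ tailWeight p j := by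
  unfold tailWeight
  split_ifs
  exacts [hp j, le_rfl]

lemma tailWeight_le_momentWeight (hp : ∀ j, 0 ≤ p j) (j : ℕ) :
    tailWeight p j ≤ momentWeight p j := by
  unfold tailWeight momentWeight
  split_ifs with hj
  · have : (2 : ℝ) ≤ j := by exact_mod_cast hj
    nlinarith [hp j]
  · exact le_rfl

lemma sum_momentWeight (hmean : ∑ j ∈ Finset.range (m + 1), (1 - (j : ℝ)) * p j = 0) :
    ∑ j ∈ Finset.range (m + 1), momentWeight p j = p 0 := by
  have hterm : ∀ j, momentWeight p j = (if j = 0 then p 0 else 0) - (1 - (j : ℝ)) * p j := by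
    rintro (_ | _ | j) <;> simp [momentWeight]
    ring
  simp [hterm, Finset.sum_sub_distrib, hmean]

lemma pgf_eq_sum_weights (hp1 : p 1 = 0)
    (hmean : ∑ j ∈ Finset.range (m + 1), (1 - (j : ℝ)) * p j = 0) (w : ℂ) :
    pgf m p w = ∑ k ∈ Finset.range (m + 1), ((momentWeight p k : ℂ) + tailWeight p k * w ^ k) := by
  have hterm : ∀ k,
      (p k : ℂ) * w ^ k = (if k = 0 then (p 0 : ℂ) else 0) + tailWeight p k * w ^ k := by
    rintro (_ | _ | k) <;> simp [tailWeight, hp1]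
  simp only [pgf, hterm, Finset.sum_add_distrib, Finset.sum_ite_eq', Finset.mem_range,
    Nat.succ_pos, if_true, ← ofReal_sum, sum_momentWeight hmean]

lemma pgf_sub_mul_pgfDeriv (hmean : ∑ j ∈ Finset.range (m + 1), (1 - (j : ℝ)) * p j = 0)
    (w : ℂ) :
    pgf m p w - w * pgfDeriv m p w =
      ∑ j ∈ Finset.range (m + 1), (momentWeight p j : ℂ) * (1 - w ^ j) := by
  have hterm : ∀ j, (p j : ℂ) * w ^ j - w * ((p j : ℂ) * (j * w ^ (j - 1))) =
      (if j = 0 then (p 0 : ℂ) else 0) - momentWeight p j * w ^ j := by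
    rintro (_ | _ | j)
    · simp [momentWeight]
    · simp [momentWeight]
      ring
    · simp only [momentWeight, le_add_iff_nonneg_left, zero_le, if_true, add_eq_zero, one_ne_zero,
        and_false, if_false]
      push_cast
      ring
  simp only [pgf, pgfDeriv, Finset.mul_sum, ← Finset.sum_sub_distrib, hterm, mul_sub, mul_one]
  rw [Finset.sum_sub_distrib, Finset.sum_sub_distrib, Finset.sum_ite_eq', if_pos (by simp),
    ← ofReal_sum, sum_momentWeight hmean]

lemma re_pgf_pos (hp : ∀ j, 0 ≤ p j) (hp0 : 0 < p 0) (hp1 : p 1 = 0)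
    (hmean : ∑ j ∈ Finset.range (m + 1), (1 - (j : ℝ)) * p j = 0) {w : ℂ} (hw : ‖w‖ < 1) :
    0 < (pgf m p w).re := by
  have hterm : ∀ k, momentWeight p k * (1 - ‖w‖) ≤
      ((momentWeight p k : ℂ) + tailWeight p k * w ^ k).re := by
    intro k
    by_cases hk : 2 ≤ k
    · have hpow : ‖w ^ k‖ ≤ ‖w‖ := by
        rw [norm_pow]
        exact pow_le_of_le_one (norm_nonneg w) hw.le (by omega)
      have hre : -‖w‖ ≤ (w ^ k).re := (neg_le_neg hpow).trans (abs_le.1 (abs_re_le_norm _)).1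
      simp only [add_re, ofReal_re, re_ofReal_mul]
      nlinarith [mul_nonneg (tailWeight_nonneg hp k) (neg_le_iff_add_nonneg.1 hre),
        mul_nonneg (sub_nonneg.2 (tailWeight_le_momentWeight hp k)) (norm_nonneg w)]
    · simp [momentWeight, tailWeight, hk]
  calc 0 < p 0 * (1 - ‖w‖) := mul_pos hp0 (by linarith)
    _ = ∑ k ∈ Finset.range (m + 1), momentWeight p k * (1 - ‖w‖) := by
      rw [← Finset.sum_mul, sum_momentWeight hmean]
    _ ≤ _ := Finset.sum_le_sum fun k _ ↦ hterm k
    _ = (pgf m p w).re := by rw [pgf_eq_sum_weights hp1 hmean, re_sum]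

lemma re_pgf_sub_mul_pgfDeriv_mul_conj_pos (hp : ∀ j, 0 ≤ p j) (hp0 : 0 < p 0) (hp1 : p 1 = 0)
    (hmean : ∑ j ∈ Finset.range (m + 1), (1 - (j : ℝ)) * p j = 0) {w : ℂ} (hw : ‖w‖ < 1) :
    0 < ((pgf m p w - w * pgfDeriv m p w) * conj (pgf m p w)).re := by
  set G : ℕ → ℕ → ℝ := fun j k ↦
    (momentWeight p j * (1 - w ^ j) * (momentWeight p k + tailWeight p k * conj (w ^ k))).re
  have hexpand : ((pgf m p w - w * pgfDeriv m p w) * conj (pgf m p w)).re =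
      ∑ j ∈ Finset.range (m + 1), ∑ k ∈ Finset.range (m + 1), G j k := by
    rw [pgf_sub_mul_pgfDeriv hmean, pgf_eq_sum_weights hp1 hmean, map_sum,
      Finset.sum_mul_sum, re_sum]
    simp [G, re_sum]
  have hpair : ∀ j ∈ Finset.range (m + 1), ∀ k ∈ Finset.range (m + 1),
      2 * (1 - ‖w‖ ^ 2) * (momentWeight p j * momentWeight p k) ≤ G j k + G k j := by
    intro j _ k _
    by_cases hj : 2 ≤ j
    · by_cases hk : 2 ≤ k
      · have hpow : ∀ {n}, 2 ≤ n → ‖w ^ n‖ ≤ ‖w‖ ^ 2 := fun hn ↦ by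
          rw [norm_pow]
          exact pow_le_pow_of_le_one (norm_nonneg w) hw.le hn
        exact le_re_add_re_of_norm_le (tailWeight_nonneg hp j) (tailWeight_le_momentWeight hp j)
          (tailWeight_nonneg hp k) (tailWeight_le_momentWeight hp k)
          (pow_le_one₀ (norm_nonneg w) hw.le) (hpow hj) (hpow hk)
      · simp [G, momentWeight, tailWeight, hk]
    · simp [G, momentWeight, tailWeight, hj]
  calc 0 < (1 - ‖w‖ ^ 2) * p 0 ^ 2 := mul_pos (by nlinarith [norm_nonneg w]) (by positivity)
    _ ≤ _ := sum_momentWeight hmean ▸ mul_sq_sum_le_sum_sum _ _ G _ hpair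
    _ = _ := hexpand.symm

end GeneratingFunction

theorem stmt_2_general
    (m : ℕ)
    (p : ℕ → ℝ)
    (hp_nonneg : ∀ j, 0 ≤ p j)
    (hp0 : 0 < p 0)
    (hp1 : p 1 = 0)
    (hmean : ∑ j ∈ Finset.range (m + 1), (1 - (j : ℝ)) * p j = 0)
    (Γ : Set ℂ)
    (hΓ : Γ = {z : ℂ | ∀ r : ℂ, 1 < ‖r‖ →
      z ≠ ∑ j ∈ Finset.range (m + 1), (p j : ℂ) * r ^ ((1 : ℤ) - (j : ℤ))}) :
    (0 : ℂ) ∈ Γ ∧ ∀ z ∈ Γ, ∀ s : ℝ, s ∈ Set.Icc (0 : ℝ) 1 → (s : ℂ) * z ∈ Γ := by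
  have hslit : ∀ w ∈ ball (0 : ℂ) 1, pgf m p w ∈ slitPlane := fun w hw ↦
    mem_slitPlane_iff.2 (Or.inl (re_pgf_pos hp_nonneg hp0 hp1 hmean (mem_ball_zero_iff.1 hw)))
  have hstar : ∀ w ∈ ball (0 : ℂ) 1, 0 < ((pgf m p w - w * pgfDeriv m p w) / pgf m p w).re :=
    fun w hw ↦ re_div_pos_of_re_mul_conj_pos
      (re_pgf_sub_mul_pgfDeriv_mul_conj_pos hp_nonneg hp0 hp1 hmean (mem_ball_zero_iff.1 hw))
  have hzero : ∀ w ∈ ball (0 : ℂ) 1, w ≠ 0 → (0 : ℂ) ≠ pgf m p w / w := fun w hw hw0 ↦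
    (div_ne_zero (slitPlane_ne_zero (hslit w hw)) hw0).symm
  subst hΓ
  simp only [mem_ofPred_eq, forall_ne_sum_mul_zpow_iff]
  refine ⟨hzero, fun z hz s hs w₁ hw₁ hw₁0 hsz ↦ ?_⟩
  obtain rfl | hs0 := hs.1.eq_or_lt
  · exact hzero w₁ hw₁ hw₁0 (by simpa using hsz)
  obtain ⟨w, hw, hw0, hdiv⟩ := exists_mul_div_eq_of_starlike (fun w _ ↦ hasDerivAt_pgf w)
    hslit hstar hw₁ hw₁0 ⟨hs0, hs.2⟩
  exact hz w hw hw0 (mul_left_cancel₀ (ofReal_ne_zero.2 hs0.ne') (hsz.trans hdiv.symm))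

/-- The stability region Γ := ℂ \ ψ({|r| > 1}), where
ψ(r) = Σ_{j=0}^m p_j r^{1−j}, is radially convex (star-shaped with respect to the origin):
0 ∈ Γ, and for every z ∈ Γ and every s ∈ [0, 1], the point s·z belongs to Γ. -/
theorem stmt_2
    (m : ℕ) (hm : 2 ≤ m)
    (p : ℕ → ℝ)
    (hp_nonneg : ∀ j, 0 ≤ p j)
    (hp_sum : ∑ j ∈ Finset.range (m + 1), p j = 1)
    (hp0 : 0 < p 0)
    (hp1 : p 1 = 0)
    (hmean : ∑ j ∈ Finset.range (m + 1), (1 - (j : ℝ)) * p j = 0)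
    (Γ : Set ℂ)
    (hΓ : Γ = {z : ℂ | ∀ r : ℂ, 1 < ‖r‖ →
      z ≠ ∑ j ∈ Finset.range (m + 1), (p j : ℂ) * r ^ ((1 : ℤ) - (j : ℤ))}) :
    (0 : ℂ) ∈ Γ ∧ ∀ z ∈ Γ, ∀ s : ℝ, s ∈ Set.Icc (0 : ℝ) 1 → (s : ℂ) * z ∈ Γ :=
  stmt_2_general m p hp_nonneg hp0 hp1 hmean Γ hΓ
end

section
/- (a) For every z ∈ ℂ \ Γ, the polynomial Q_z has exactly one root of magnitude strictly greater than 1: there exists a unique r ∈ ℂ with Q_z(r) = 0 and |r| > 1. (b) For every z in the topological interior of Γ, every root r of Q_z satisfies |r| < 1. -/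
/-!
For `r ≠ 0` one has `p₀ Q_z(r) = r^{m-1} (ψ(r) - z)`, so the nonzero roots of `Q_z` are exactly
the solutions of `ψ(r) = z`. Since `p₁ = 0`, `ψ(r) = p₀ r + g(1/r)` with
`g(w) = ∑_{j ≥ 2} p_j w^{j-1}`, and on the closed unit disc `g` is Lipschitz with constant
`∑_{j ≥ 2} (j - 1) p_j`, which equals `p₀` by the mean-zero condition. As `r ↦ 1/r` strictly
contracts distances on `|r| > 1`, `ψ` is injective there, which is (a). For (b), a root with
`|r| ≥ 1` lies in the closure of `{|r| > 1}`, so by continuity of `ψ` at `r ≠ 0` the point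
`z = ψ(r)` lies in the closure of `ψ({|r| > 1}) = ℂ \ Γ`.
-/

open Finset

lemma norm_pow_sub_pow_le {R : Type*} [SeminormedRing R] [NormOneClass R] {a b : R}
    (ha : ‖a‖ ≤ 1) (hb : ‖b‖ ≤ 1) (n : ℕ) : ‖a ^ n - b ^ n‖ ≤ n * ‖a - b‖ := by
  induction n with
  | zero => simp
  | succ n ih =>
    have han : ‖a ^ n‖ ≤ 1 := (norm_pow_le a n).trans (pow_le_one₀ (norm_nonneg a) ha)
    calc ‖a ^ (n + 1) - b ^ (n + 1)‖
          = ‖a ^ n * (a - b) + (a ^ n - b ^ n) * b‖ := by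
          rw [pow_succ, pow_succ]; noncomm_ring
      _ ≤ ‖a ^ n‖ * ‖a - b‖ + ‖a ^ n - b ^ n‖ * ‖b‖ :=
          (norm_add_le _ _).trans (add_le_add (norm_mul_le _ _) (norm_mul_le _ _))
      _ ≤ 1 * ‖a - b‖ + n * ‖a - b‖ * 1 := by gcongr
      _ = (n + 1 : ℕ) * ‖a - b‖ := by push_cast; ring

lemma norm_sum_mul_pow_sub_sum_mul_pow_le {ι : Type*} (s : Finset ι) {c : ι → ℝ}
    (hc : ∀ i ∈ s, 0 ≤ c i) (n : ι → ℕ) {u v : ℂ} (hu : ‖u‖ ≤ 1) (hv : ‖v‖ ≤ 1) :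
    ‖∑ i ∈ s, (c i : ℂ) * u ^ n i - ∑ i ∈ s, (c i : ℂ) * v ^ n i‖
      ≤ (∑ i ∈ s, c i * n i) * ‖u - v‖ := by
  rw [← sum_sub_distrib, sum_mul]
  refine (norm_sum_le _ _).trans (sum_le_sum fun i hi => ?_)
  rw [← mul_sub, norm_mul, Complex.norm_real, Real.norm_of_nonneg (hc i hi), mul_assoc]
  exact mul_le_mul_of_nonneg_left (norm_pow_sub_pow_le hu hv _) (hc i hi)

lemma injOn_mul_add_comp_inv {c : ℝ} (hc : 0 < c) {g : ℂ → ℂ}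
    (hg : ∀ u v : ℂ, ‖u‖ ≤ 1 → ‖v‖ ≤ 1 → ‖g u - g v‖ ≤ c * ‖u - v‖) :
    Set.InjOn (fun r : ℂ => c * r + g r⁻¹) {r | 1 < ‖r‖} := by
  intro r₁ (h₁ : 1 < ‖r₁‖) r₂ (h₂ : 1 < ‖r₂‖) heq
  by_contra hne
  have hr₁ : r₁ ≠ 0 := norm_pos_iff.mp (by linarith)
  have hr₂ : r₂ ≠ 0 := norm_pos_iff.mp (by linarith)
  have hd : 0 < ‖r₁ - r₂‖ := norm_pos_iff.mpr (sub_ne_zero.mpr hne)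
  have hinv : ‖r₂⁻¹ - r₁⁻¹‖ < ‖r₁ - r₂‖ := by
    rw [inv_sub_inv hr₂ hr₁, norm_div, norm_mul]
    exact div_lt_self hd (by nlinarith)
  have hbound : c * ‖r₁ - r₂‖ ≤ c * ‖r₂⁻¹ - r₁⁻¹‖ :=
    calc c * ‖r₁ - r₂‖ = ‖g r₂⁻¹ - g r₁⁻¹‖ := by
          rw [← Real.norm_of_nonneg hc.le, ← Complex.norm_real, ← norm_mul]
          congr 1
          linear_combination heq
      _ ≤ c * ‖r₂⁻¹ - r₁⁻¹‖ :=
          hg _ _ (by simpa using (inv_lt_one_of_one_lt₀ h₂).le)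
            (by simpa using (inv_lt_one_of_one_lt₀ h₁).le)
  exact (mul_lt_mul_of_pos_left hinv hc).not_ge hbound

lemma mem_closure_one_lt_norm {r : ℂ} (hr : 1 ≤ ‖r‖) : r ∈ closure {w : ℂ | 1 < ‖w‖} := by
  have hcompl : {w : ℂ | 1 < ‖w‖} = (Metric.closedBall 0 1)ᶜ := by ext; simp
  rw [hcompl, closure_compl, interior_closedBall _ one_ne_zero]
  simpa using hr

lemma sum_range_succ_eq_add_add_sum_Icc {M : Type*} [AddCommMonoid M] (f : ℕ → M) {m : ℕ}
    (hm : 1 ≤ m) : ∑ j ∈ range (m + 1), f j = f 0 + f 1 + ∑ j ∈ Icc 2 m, f j := by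
  have hsplit : range (m + 1) = insert 0 (insert 1 (Icc 2 m)) := by
    ext j; simp only [mem_range, mem_insert, mem_Icc]; omega
  rw [hsplit, sum_insert (by simp), sum_insert (by simp), add_assoc]

namespace StabilityRegion

variable {m : ℕ} {p : ℕ → ℝ}

noncomputable def psi (m : ℕ) (p : ℕ → ℝ) (r : ℂ) : ℂ :=
  ∑ j ∈ range (m + 1), (p j : ℂ) * r ^ ((1 : ℤ) - (j : ℤ))

noncomputable def charPoly (m : ℕ) (p : ℕ → ℝ) (z r : ℂ) : ℂ :=
  r ^ m - z / (p 0 : ℂ) * r ^ (m - 1) + ∑ j ∈ Icc 2 m, ((p j / p 0 : ℝ) : ℂ) * r ^ (m - j)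

lemma continuousAt_psi {r : ℂ} (hr : r ≠ 0) : ContinuousAt (psi m p) r := by
  unfold psi
  fun_prop (disch := exact Or.inl hr)

lemma psi_eq_mul_add_sum_inv_pow (hm : 1 ≤ m) (hp1 : p 1 = 0) (r : ℂ) :
    psi m p r = p 0 * r + ∑ j ∈ Icc 2 m, (p j : ℂ) * r⁻¹ ^ (j - 1) := by
  rw [psi, sum_range_succ_eq_add_add_sum_Icc _ hm, hp1]
  congr 1
  · simp
  · refine sum_congr rfl fun j hj => ?_
    have hj : 1 ≤ j := by simp only [mem_Icc] at hj; omega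
    rw [inv_pow, ← zpow_natCast, ← zpow_neg, Nat.cast_sub hj]
    ring_nf

lemma pow_mul_psi (hm : 1 ≤ m) {r : ℂ} (hr : r ≠ 0) :
    r ^ (m - 1) * psi m p r = ∑ j ∈ range (m + 1), (p j : ℂ) * r ^ (m - j) := by
  rw [psi, mul_sum]
  refine sum_congr rfl fun j hj => ?_
  have hj : j ≤ m := Nat.lt_succ_iff.mp (mem_range.mp hj)
  rw [mul_left_comm, ← zpow_natCast, ← zpow_natCast, ← zpow_add₀ hr,
    Nat.cast_sub hm, Nat.cast_sub hj]
  ring_nf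

lemma p0_mul_charPoly (hm : 1 ≤ m) (hp0 : p 0 ≠ 0) (hp1 : p 1 = 0) (z : ℂ) {r : ℂ}
    (hr : r ≠ 0) : (p 0 : ℂ) * charPoly m p z r = r ^ (m - 1) * (psi m p r - z) := by
  have hp0' : (p 0 : ℂ) ≠ 0 := by exact_mod_cast hp0
  rw [mul_sub, pow_mul_psi hm hr, sum_range_succ_eq_add_add_sum_Icc _ hm, charPoly, hp1,
    mul_add, mul_sum]
  simp only [Complex.ofReal_div, Complex.ofReal_zero, zero_mul, add_zero, Nat.sub_zero]
  rw [sum_congr rfl fun j _ => by rw [← mul_assoc, mul_div_cancel₀ _ hp0']]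
  field_simp
  ring

lemma charPoly_eq_zero_iff (hm : 1 ≤ m) (hp0 : p 0 ≠ 0) (hp1 : p 1 = 0) {z r : ℂ}
    (hr : r ≠ 0) : charPoly m p z r = 0 ↔ psi m p r = z := by
  have hp0' : (p 0 : ℂ) ≠ 0 := by exact_mod_cast hp0
  rw [← mul_right_inj' hp0', p0_mul_charPoly hm hp0 hp1 z hr, mul_zero,
    mul_eq_zero_iff_left (pow_ne_zero _ hr), sub_eq_zero]

lemma sum_Icc_mul_sub_one_eq_of_mean_zero (hm : 1 ≤ m) (hp1 : p 1 = 0)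
    (hmean : ∑ j ∈ range (m + 1), (1 - (j : ℝ)) * p j = 0) :
    ∑ j ∈ Icc 2 m, p j * ((j - 1 : ℕ) : ℝ) = p 0 := by
  rw [sum_range_succ_eq_add_add_sum_Icc _ hm, hp1] at hmean
  have hterm : ∀ j ∈ Icc 2 m, p j * ((j - 1 : ℕ) : ℝ) = -((1 - (j : ℝ)) * p j) := by
    intro j hj
    rw [Nat.cast_sub (by simp only [mem_Icc] at hj; omega)]
    push_cast
    ring
  rw [sum_congr rfl hterm, sum_neg_distrib]
  simp only [Nat.cast_zero, sub_zero, one_mul, mul_zero, add_zero] at hmean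
  linarith

lemma injOn_psi (hm : 1 ≤ m) (hp_nonneg : ∀ j, 0 ≤ p j) (hp0 : 0 < p 0) (hp1 : p 1 = 0)
    (hmean : ∑ j ∈ range (m + 1), (1 - (j : ℝ)) * p j = 0) :
    Set.InjOn (psi m p) {r | 1 < ‖r‖} := by
  have hlip (u v : ℂ) (hu : ‖u‖ ≤ 1) (hv : ‖v‖ ≤ 1) :
      ‖∑ j ∈ Icc 2 m, (p j : ℂ) * u ^ (j - 1) - ∑ j ∈ Icc 2 m, (p j : ℂ) * v ^ (j - 1)‖
        ≤ p 0 * ‖u - v‖ := by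
    simpa only [sum_Icc_mul_sub_one_eq_of_mean_zero hm hp1 hmean] using
      norm_sum_mul_pow_sub_sum_mul_pow_le (Icc 2 m) (fun j _ => hp_nonneg j) (· - 1) hu hv
  exact (injOn_mul_add_comp_inv hp0 hlip).congr fun r _ =>
    (psi_eq_mul_add_sum_inv_pow hm hp1 r).symm

end StabilityRegion

open StabilityRegion

theorem stmt_4_general
    (m : ℕ) (hm : 2 ≤ m)
    (p : ℕ → ℝ)
    (hp_nonneg : ∀ j, 0 ≤ p j)
    (hp0 : 0 < p 0)
    (hp1 : p 1 = 0)
    (hmean : ∑ j ∈ Finset.range (m + 1), (1 - (j : ℝ)) * p j = 0)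
    (Q : ℂ → ℂ → ℂ)
    (hQ : ∀ z r : ℂ, Q z r = r ^ m - z / (p 0 : ℂ) * r ^ (m - 1)
      + ∑ j ∈ Finset.Icc 2 m, ((p j / p 0 : ℝ) : ℂ) * r ^ (m - j))
    (Γ : Set ℂ)
    (hΓ : Γ = {z : ℂ | ∀ r : ℂ, 1 < ‖r‖ →
      z ≠ ∑ j ∈ Finset.range (m + 1), (p j : ℂ) * r ^ ((1 : ℤ) - (j : ℤ))}) :
    (∀ z : ℂ, z ∉ Γ → ∃! r : ℂ, Q z r = 0 ∧ 1 < ‖r‖) ∧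
    (∀ z ∈ interior Γ, ∀ r : ℂ, Q z r = 0 → ‖r‖ < 1) := by
  obtain rfl : Q = charPoly m p := funext fun z => funext (hQ z)
  obtain rfl : Γ = (psi m p '' {r | 1 < ‖r‖})ᶜ := by
    rw [hΓ]; ext z; simp [psi, eq_comm]
  have hm1 : 1 ≤ m := by omega
  have hroot {z r : ℂ} (hr : 1 ≤ ‖r‖) : charPoly m p z r = 0 ↔ psi m p r = z :=
    charPoly_eq_zero_iff hm1 hp0.ne' hp1 (norm_pos_iff.mp (one_pos.trans_le hr))
  refine ⟨fun z hz => ?_, fun z hz r hr => ?_⟩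
  · obtain ⟨r, hr1, rfl⟩ := of_not_not hz
    refine ⟨r, ⟨(hroot hr1.le).2 rfl, hr1⟩, fun s ⟨hs, hs1⟩ => ?_⟩
    exact injOn_psi hm1 hp_nonneg hp0 hp1 hmean hs1 hr1 ((hroot hs1.le).1 hs)
  · by_contra! h1
    rw [interior_compl, ← (hroot h1).1 hr] at hz
    exact hz (mem_closure_image (continuousAt_psi (norm_pos_iff.mp (one_pos.trans_le h1)))
      (mem_closure_one_lt_norm h1))

/-- (a) For every z ∈ ℂ \ Γ, the polynomial Q_z has exactly one root of
magnitude strictly greater than 1. (b) For every z in the topological interior of Γ,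
every root r of Q_z satisfies |r| < 1. -/
theorem stmt_4
    (m : ℕ) (hm : 2 ≤ m)
    (p : ℕ → ℝ)
    (hp_nonneg : ∀ j, 0 ≤ p j)
    (hp_sum : ∑ j ∈ Finset.range (m + 1), p j = 1)
    (hp0 : 0 < p 0)
    (hp1 : p 1 = 0)
    (hmean : ∑ j ∈ Finset.range (m + 1), (1 - (j : ℝ)) * p j = 0)
    (Q : ℂ → ℂ → ℂ)
    (hQ : ∀ z r : ℂ, Q z r = r ^ m - z / (p 0 : ℂ) * r ^ (m - 1)
      + ∑ j ∈ Finset.Icc 2 m, ((p j / p 0 : ℝ) : ℂ) * r ^ (m - j))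
    (Γ : Set ℂ)
    (hΓ : Γ = {z : ℂ | ∀ r : ℂ, 1 < ‖r‖ →
      z ≠ ∑ j ∈ Finset.range (m + 1), (p j : ℂ) * r ^ ((1 : ℤ) - (j : ℤ))}) :
    (∀ z : ℂ, z ∉ Γ → ∃! r : ℂ, Q z r = 0 ∧ 1 < ‖r‖) ∧
    (∀ z ∈ interior Γ, ∀ r : ℂ, Q z r = 0 → ‖r‖ < 1) :=
  stmt_4_general m hm p hp_nonneg hp0 hp1 hmean Q hQ Γ hΓ
end

section
/- For every ε > 0 there exists a constant c > 0 (depending only on p and ε) such that |P_n(1+ε)| ≥ c·(1 + σ^{−1}·√(2ε))^n for all n ≥ 0. -/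
/-!
At the real point `z = 1 + ε` the recurrence has real coefficients, so `q n := P n z` is real, and
it is positive and nondecreasing since the weights `p j` (`j ≥ 2`) sum to `1 - p 0`.
Let `φ(u) = ∑ p j u^(1-j)`, so that `u ^ n` solves the recurrence exactly when `φ(u) = z`.
If `q` grows at rate `μ` on a window of length `m`, the recurrence forces the rate
`μ + (z - φ(μ)) / p 0` at the next index. Mean zero and variance `σ²` give the Taylor bound
`φ(u) < 1 + σ² (u - 1)² / 2 ≤ z` on `[1, ρ]`, `ρ = 1 + σ⁻¹ √(2ε)`, so by compactness every round
of `m` steps raises the rate by a fixed amount until it reaches `ρ`; from then on `q n ≥ c ρ ^ n`.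
-/

theorem inv_one_add_pow_lt {y : ℝ} (hy : 0 < y) {k : ℕ} (hk : 1 ≤ k) :
    ((1 + y) ^ k)⁻¹ < 1 - k * y + k * (k + 1) / 2 * y ^ 2 := by
  rw [inv_lt_iff_one_lt_mul₀' (by positivity)]
  induction k, hk using Nat.le_induction with
  | base => nlinarith [pow_pos hy 3]
  | succ k hk ih =>
    have hsucc : (1 + y) ^ (k + 1) * (1 - ↑(k + 1) * y + ↑(k + 1) * (↑(k + 1) + 1) / 2 * y ^ 2) =
        (1 + y) ^ k * (1 - k * y + k * (k + 1) / 2 * y ^ 2) +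
          (1 + y) ^ k * ((k + 1) * (k + 2) / 2 * y ^ 3) := by
      push_cast; ring
    have : 0 < (1 + y) ^ k * ((k + 1) * (k + 2) / 2 * y ^ 3) := by positivity
    linarith

theorem zpow_one_sub_lt {u : ℝ} (hu : 1 < u) {j : ℕ} (hj : 2 ≤ j) :
    u ^ (1 - j : ℤ) < 1 + (1 - j) * (u - 1) + j * (j - 1) / 2 * (u - 1) ^ 2 := by
  obtain ⟨k, rfl⟩ : ∃ k, j = k + 2 := ⟨j - 2, by omega⟩
  have h := inv_one_add_pow_lt (sub_pos.2 hu) (Nat.le_add_left 1 k)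
  rw [add_sub_cancel] at h
  rw [show (1 - ((k + 2 : ℕ) : ℤ)) = -((k + 1 : ℕ) : ℤ) by push_cast; ring, zpow_neg,
    zpow_natCast]
  convert h using 1
  push_cast
  ring

theorem zpow_one_sub_le {u : ℝ} (hu : 1 ≤ u) (j : ℕ) :
    u ^ (1 - j : ℤ) ≤ 1 + (1 - j) * (u - 1) + j * (j - 1) / 2 * (u - 1) ^ 2 := by
  rcases hu.eq_or_lt with rfl | hu
  · simp
  match j with
  | 0 => simp
  | 1 => simp
  | j + 2 => exact (zpow_one_sub_lt hu (by omega)).le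

/-- The function `φ` of the proof sketch. -/
noncomputable def stepGen (m : ℕ) (p : ℕ → ℝ) (u : ℝ) : ℝ :=
  ∑ j ∈ Finset.range (m + 1), p j * u ^ (1 - j : ℤ)

theorem stepGen_one (m : ℕ) (p : ℕ → ℝ) : stepGen m p 1 = ∑ j ∈ Finset.range (m + 1), p j := by
  simp [stepGen]

theorem stepGen_eq {m : ℕ} {p : ℕ → ℝ} (hm : 2 ≤ m) (hp1 : p 1 = 0) (u : ℝ) :
    stepGen m p u = p 0 * u + ∑ j ∈ Finset.Icc 2 m, p j / u ^ (j - 1) := by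
  obtain ⟨k, rfl⟩ : ∃ k, m = k + 2 := ⟨m - 2, by omega⟩
  rw [stepGen, Finset.sum_range_succ', Finset.sum_range_succ', ← Finset.Ico_add_one_right_eq_Icc,
    Finset.sum_Ico_eq_sum_range]
  rw [show k + 2 + 1 - 2 = k + 1 by omega, zero_add, hp1, zero_mul, add_zero, add_comm]
  simp only [Nat.cast_zero, sub_zero, zpow_one]
  refine congrArg _ (Finset.sum_congr rfl fun i _ => ?_)
  rw [show (1 - ((i + 1 + 1 : ℕ) : ℤ)) = -((i + 1 : ℕ) : ℤ) by push_cast; ring, zpow_neg,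
    zpow_natCast, div_eq_mul_inv, add_comm 2]
  rfl

theorem continuousOn_stepGen (m : ℕ) (p : ℕ → ℝ) : ContinuousOn (stepGen m p) (Set.Ioi 0) :=
  continuousOn_finsetSum _ fun _ _ =>
    continuousOn_const.mul (continuousOn_id.zpow₀ _ fun _ hu => Or.inl (ne_of_gt hu))

theorem exists_two_le_pos_of_sum_eq_zero {m : ℕ} {p : ℕ → ℝ} (hp0 : 0 < p 0)
    (hmean : ∑ j ∈ Finset.range (m + 1), (1 - (j : ℝ)) * p j = 0) :
    ∃ j ∈ Finset.range (m + 1), 2 ≤ j ∧ 0 < p j := by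
  by_contra! h
  refine (Finset.sum_pos' (fun j hj => ?_) ⟨0, by simp, by simpa using hp0⟩).ne' hmean
  rcases Nat.lt_or_ge j 2 with hj2 | hj2
  · interval_cases j <;> simp [hp0.le]
  · exact mul_nonneg_of_nonpos_of_nonpos (by norm_num; exact_mod_cast (by omega : 1 ≤ j))
      (h j hj hj2)

theorem stepGen_lt {m : ℕ} {p : ℕ → ℝ} (hp_nonneg : ∀ j, 0 ≤ p j)
    (hp_sum : ∑ j ∈ Finset.range (m + 1), p j = 1) (hp0 : 0 < p 0)
    (hmean : ∑ j ∈ Finset.range (m + 1), (1 - (j : ℝ)) * p j = 0) {u : ℝ} (hu : 1 < u) :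
    stepGen m p u <
      1 + (∑ j ∈ Finset.range (m + 1), (1 - (j : ℝ)) ^ 2 * p j) / 2 * (u - 1) ^ 2 := by
  obtain ⟨j₀, hj₀, hj₀2, hpj₀⟩ := exists_two_le_pos_of_sum_eq_zero hp0 hmean
  calc stepGen m p u
      < ∑ j ∈ Finset.range (m + 1),
          p j * (1 + (1 - j) * (u - 1) + j * (j - 1) / 2 * (u - 1) ^ 2) :=
        Finset.sum_lt_sum
          (fun j _ => mul_le_mul_of_nonneg_left (zpow_one_sub_le hu.le j) (hp_nonneg j))
          ⟨j₀, hj₀, mul_lt_mul_of_pos_left (zpow_one_sub_lt hu hj₀2) hpj₀⟩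
    _ = ∑ j ∈ Finset.range (m + 1), p j
          + (∑ j ∈ Finset.range (m + 1), (1 - (j : ℝ)) * p j) * (u - 1)
          + (∑ j ∈ Finset.range (m + 1), (1 - (j : ℝ)) ^ 2 * p j
              - ∑ j ∈ Finset.range (m + 1), (1 - (j : ℝ)) * p j) / 2 * (u - 1) ^ 2 := by
        simp only [Finset.sum_mul, Finset.sum_div, ← Finset.sum_sub_distrib,
          ← Finset.sum_add_distrib]
        exact Finset.sum_congr rfl fun j _ => by ring
    _ = _ := by rw [hp_sum, hmean]; ring

theorem exists_pos_add_le_of_forall_lt {X : Type*} [TopologicalSpace X] {K : Set X}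
    (hK : IsCompact K) {f : X → ℝ} (hf : ContinuousOn f K) {C : ℝ} (hlt : ∀ x ∈ K, f x < C) :
    ∃ δ > 0, ∀ x ∈ K, f x + δ ≤ C := by
  rcases K.eq_empty_or_nonempty with rfl | hne
  · exact ⟨1, one_pos, by simp⟩
  obtain ⟨x₀, hx₀, hmax⟩ := hK.exists_isMaxOn hne hf
  exact ⟨C - f x₀, sub_pos.2 (hlt x₀ hx₀), fun x hx => by linarith [isMaxOn_iff.1 hmax x hx]⟩

theorem stepGen_lt_one_add {m : ℕ} {p : ℕ → ℝ} (hp_nonneg : ∀ j, 0 ≤ p j)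
    (hp_sum : ∑ j ∈ Finset.range (m + 1), p j = 1) (hp0 : 0 < p 0)
    (hmean : ∑ j ∈ Finset.range (m + 1), (1 - (j : ℝ)) * p j = 0) {ε ρ : ℝ} (hε : 0 < ε)
    (hρ : (∑ j ∈ Finset.range (m + 1), (1 - (j : ℝ)) ^ 2 * p j) * (ρ - 1) ^ 2 ≤ 2 * ε) :
    ∀ u ∈ Set.Icc 1 ρ, stepGen m p u < 1 + ε := by
  rintro u ⟨hu1, huρ⟩
  rcases hu1.eq_or_lt with rfl | hu1
  · rw [stepGen_one, hp_sum]; linarith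
  have hvar : 0 ≤ ∑ j ∈ Finset.range (m + 1), (1 - (j : ℝ)) ^ 2 * p j :=
    Finset.sum_nonneg fun j _ => mul_nonneg (sq_nonneg _) (hp_nonneg j)
  have hsq : (u - 1) ^ 2 ≤ (ρ - 1) ^ 2 := pow_le_pow_left₀ (by linarith) (by linarith) 2
  nlinarith [stepGen_lt hp_nonneg hp_sum hp0 hmean hu1, mul_le_mul_of_nonneg_left hsq hvar]

theorem pow_mul_le_of_forall_mul_le {q : ℕ → ℝ} {μ : ℝ} (hμ : 0 ≤ μ) {a : ℕ} :
    ∀ d, (∀ i, a ≤ i → i < a + d → μ * q i ≤ q (i + 1)) → μ ^ d * q a ≤ q (a + d)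
  | 0, _ => by simp
  | d + 1, h =>
    calc μ ^ (d + 1) * q a = μ * (μ ^ d * q a) := by ring
      _ ≤ μ * q (a + d) := mul_le_mul_of_nonneg_left
          (pow_mul_le_of_forall_mul_le hμ d fun i h₁ h₂ => h i h₁ (by omega)) hμ
      _ ≤ q (a + (d + 1)) := h _ (by omega) (by omega)

theorem mul_le_succ_of_rec {m : ℕ} {p : ℕ → ℝ} (hm : 2 ≤ m) (hp_nonneg : ∀ j, 0 ≤ p j)
    (hp0 : 0 < p 0) (hp1 : p 1 = 0) {z : ℝ} {q : ℕ → ℝ} {n : ℕ} (hmn : m ≤ n + 1)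
    (hrec : p 0 * q (n + 1) = z * q n - ∑ j ∈ Finset.Icc 2 m, p j * q (n + 1 - j))
    {μ ν : ℝ} (hμ : 0 < μ) (hrate : ∀ i, n + 1 - m ≤ i → i < n → μ * q i ≤ q (i + 1))
    (hqn : 0 ≤ q n) (hgap : stepGen m p μ + p 0 * (ν - μ) ≤ z) : ν * q n ≤ q (n + 1) := by
  rw [stepGen_eq hm hp1] at hgap
  have hback : ∀ j ∈ Finset.Icc 2 m, p j * q (n + 1 - j) ≤ p j / μ ^ (j - 1) * q n := by
    intro j hj
    obtain ⟨hj2, hjm⟩ := Finset.mem_Icc.1 hj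
    have h := pow_mul_le_of_forall_mul_le (a := n + 1 - j) hμ.le (j - 1)
      fun i h₁ h₂ => hrate i (by omega) (by omega)
    rw [show n + 1 - j + (j - 1) = n by omega, ← le_div_iff₀' (by positivity)] at h
    rw [div_mul_eq_mul_div, mul_div_assoc]
    exact mul_le_mul_of_nonneg_left h (hp_nonneg j)
  have hsum := Finset.sum_le_sum hback
  rw [← Finset.sum_mul] at hsum
  refine le_of_mul_le_mul_left ?_ hp0
  calc p 0 * (ν * q n)
      = (p 0 * ν) * q n := by ring
    _ ≤ (z - ∑ j ∈ Finset.Icc 2 m, p j / μ ^ (j - 1)) * q n :=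
        mul_le_mul_of_nonneg_right (by linarith) hqn
    _ ≤ p 0 * q (n + 1) := by rw [hrec]; linarith

theorem pos_and_le_succ_of_rec {m : ℕ} {p : ℕ → ℝ} (hm : 2 ≤ m) (hp_nonneg : ∀ j, 0 ≤ p j)
    (hp_sum : ∑ j ∈ Finset.range (m + 1), p j = 1) (hp0 : 0 < p 0) (hp1 : p 1 = 0)
    {z : ℝ} (hz : 1 ≤ z) {q : ℕ → ℝ} (hinit : ∀ n < m, q n = z ^ n)
    (hrec : ∀ n, m - 1 ≤ n →
      p 0 * q (n + 1) = z * q n - ∑ j ∈ Finset.Icc 2 m, p j * q (n + 1 - j))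
    (n : ℕ) : 0 < q n ∧ q n ≤ q (n + 1) := by
  induction n using Nat.strong_induction_on with
  | _ n ih =>
  have hpos : 0 < q n := by
    rcases n with _ | k
    · rw [hinit 0 (by omega), pow_zero]; exact one_pos
    · exact (ih k (by omega)).1.trans_le (ih k (by omega)).2
  refine ⟨hpos, ?_⟩
  rcases Nat.lt_or_ge (n + 1) m with h | h
  · rw [hinit n (by omega), hinit (n + 1) h]; exact pow_le_pow_right₀ hz n.le_succ
  · simpa using mul_le_succ_of_rec (ν := 1) hm hp_nonneg hp0 hp1 h (hrec n (by omega)) one_pos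
      (fun i _ hi => by simpa using (ih i hi).2) hpos.le (by simpa [stepGen_one, hp_sum] using hz)

theorem exists_forall_mul_le_of_gap {m : ℕ} {p : ℕ → ℝ} (hm : 2 ≤ m) (hp_nonneg : ∀ j, 0 ≤ p j)
    (hp0 : 0 < p 0) (hp1 : p 1 = 0) {z : ℝ} {q : ℕ → ℝ}
    (hrec : ∀ n, m - 1 ≤ n →
      p 0 * q (n + 1) = z * q n - ∑ j ∈ Finset.Icc 2 m, p j * q (n + 1 - j))
    (hq_nonneg : ∀ n, 0 ≤ q n) (hq_mono : ∀ n, q n ≤ q (n + 1)) {ρ δ : ℝ} (hρ : 1 ≤ ρ)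
    (hδ : 0 < δ) (hgap : ∀ u ∈ Set.Icc 1 ρ, stepGen m p u + δ ≤ z) :
    ∃ N, ∀ n, N ≤ n → ρ * q n ≤ q (n + 1) := by
  set η := δ / p 0 with hη
  have hround : ∀ t : ℕ, ∀ n, t * m ≤ n → min ρ (1 + t * η) * q n ≤ q (n + 1) := by
    intro t
    induction t with
    | zero => intro n _; simpa [hρ] using hq_mono n
    | succ t ih =>
      intro n hn
      rw [Nat.succ_mul] at hn
      have hη0 : 0 < η := by positivity
      have hμ : 1 ≤ min ρ (1 + t * η) := le_min hρ (le_add_of_nonneg_right (by positivity))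
      have hν : min ρ (1 + ↑(t + 1) * η) ≤ min ρ (1 + t * η) + η := by
        rw [← min_add_add_right]; push_cast
        exact min_le_min (by linarith) (by linarith)
      have hpη : p 0 * η = δ := by rw [hη]; field_simp
      refine mul_le_succ_of_rec hm hp_nonneg hp0 hp1 (by omega) (hrec n (by omega)) (by linarith)
        (fun i hi _ => ih i (by omega)) (hq_nonneg n) ?_
      nlinarith [hgap _ ⟨hμ, min_le_left _ _⟩]
  obtain ⟨t, ht⟩ := exists_nat_ge ((ρ - 1) / η)
  have hρt : min ρ (1 + t * η) = ρ :=
    min_eq_left (by rw [div_le_iff₀ (by positivity)] at ht; linarith)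
  exact ⟨t * m, fun n hn => by simpa [hρt] using hround t n hn⟩

theorem exists_pos_mul_pow_le {q : ℕ → ℝ} (hq : ∀ n, 0 < q n) {ρ : ℝ} (hρ : 0 < ρ) {N : ℕ}
    (hrate : ∀ n, N ≤ n → ρ * q n ≤ q (n + 1)) : ∃ c, 0 < c ∧ ∀ n, c * ρ ^ n ≤ q n := by
  set c := (Finset.range (N + 1)).inf' (by simp) fun n => q n / ρ ^ n
  have hc : ∀ n, c ≤ q n / ρ ^ n := by
    intro n
    induction n with
    | zero => exact Finset.inf'_le _ (by simp)
    | succ n ih =>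
      rcases Nat.lt_or_ge n N with h | h
      · exact Finset.inf'_le _ (Finset.mem_range.2 (by omega))
      · refine ih.trans ?_
        rw [div_le_div_iff₀ (by positivity) (by positivity), pow_succ]
        nlinarith [hrate n h, pow_pos hρ n]
  exact ⟨c, (Finset.lt_inf'_iff _).2 fun n _ => by have := hq n; positivity,
    fun n => (le_div_iff₀ (pow_pos hρ n)).1 (hc n)⟩

theorem im_eq_zero_of_rec {m : ℕ} (hm : 0 < m) {w : ℕ → ℂ} {a : ℝ} {b : ℕ → ℝ}
    (hinit : ∀ k < m, (w k).im = 0)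
    (hrec : ∀ k, m - 1 ≤ k →
      w (k + 1) = a * w k - ∑ j ∈ Finset.Icc 2 m, (b j : ℂ) * w (k + 1 - j))
    (n : ℕ) : (w n).im = 0 := by
  induction n using Nat.strong_induction_on with
  | _ n ih =>
  rcases Nat.lt_or_ge n m with h | h
  · exact hinit n h
  obtain ⟨k, rfl⟩ : ∃ k, n = k + 1 := ⟨n - 1, by omega⟩
  rw [hrec k (by omega), Complex.sub_im, Complex.im_sum, Complex.im_ofReal_mul, ih k (by omega),
    Finset.sum_eq_zero fun j hj => by
      rw [Complex.im_ofReal_mul, ih _ (by have := (Finset.mem_Icc.1 hj).1; omega), mul_zero]]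
  simp

theorem exists_real_of_rec {m : ℕ} (hm : 0 < m) {p : ℕ → ℝ} (hp0 : p 0 ≠ 0) {z : ℝ}
    {P : ℕ → ℂ} (hinit : ∀ k < m, P k = (z : ℂ) ^ k)
    (hrec : ∀ k, m - 1 ≤ k → P (k + 1) =
      z / (p 0 : ℂ) * P k - ∑ j ∈ Finset.Icc 2 m, ((p j / p 0 : ℝ) : ℂ) * P (k + 1 - j)) :
    ∃ q : ℕ → ℝ, (∀ n, P n = q n) ∧ (∀ n < m, q n = z ^ n) ∧
      ∀ n, m - 1 ≤ n → p 0 * q (n + 1) = z * q n - ∑ j ∈ Finset.Icc 2 m, p j * q (n + 1 - j) := by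
  have him := im_eq_zero_of_rec hm (w := P) (a := z / p 0) (b := fun j => p j / p 0)
    (fun k hk => by rw [hinit k hk, ← Complex.ofReal_pow, Complex.ofReal_im])
    (fun k hk => by rw [hrec k hk, Complex.ofReal_div])
  set q : ℕ → ℝ := fun n => (P n).re
  have hP : ∀ n, P n = q n := fun n => Complex.ext rfl (by simp [him n])
  refine ⟨q, hP, fun n hn => ?_, fun n hn => ?_⟩
  · exact_mod_cast (hP n).symm.trans (hinit n hn)
  · have h := hrec n hn
    simp only [hP] at h
    have h' : q (n + 1) = z / p 0 * q n - ∑ j ∈ Finset.Icc 2 m, p j / p 0 * q (n + 1 - j) := by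
      exact_mod_cast h
    rw [h', mul_sub, Finset.mul_sum]
    field_simp

/-- For every ε > 0 there exists a constant c > 0 (depending only on p and ε)
such that |P_n(1+ε)| ≥ c·(1 + σ^{−1}·√(2ε))^n for all n ≥ 0. -/
theorem stmt_6
    (m : ℕ) (hm : 2 ≤ m)
    (p : ℕ → ℝ)
    (hp_nonneg : ∀ j, 0 ≤ p j)
    (hp_sum : ∑ j ∈ Finset.range (m + 1), p j = 1)
    (hp0 : 0 < p 0)
    (hp1 : p 1 = 0)
    (hmean : ∑ j ∈ Finset.range (m + 1), (1 - (j : ℝ)) * p j = 0)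
    (σ : ℝ)
    (hσ : σ = Real.sqrt (∑ j ∈ Finset.range (m + 1), (1 - (j : ℝ)) ^ 2 * p j))
    (P : ℕ → ℂ → ℂ)
    (hPinit : ∀ k, k < m → ∀ z : ℂ, P k z = z ^ k)
    (hPrec : ∀ k, m - 1 ≤ k → ∀ z : ℂ, P (k + 1) z =
      z / (p 0 : ℂ) * P k z
        - ∑ j ∈ Finset.Icc 2 m, ((p j / p 0 : ℝ) : ℂ) * P (k + 1 - j) z)
    (ε : ℝ) (hε : 0 < ε) :
    ∃ c : ℝ, 0 < c ∧ ∀ n : ℕ,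
      c * (1 + σ⁻¹ * Real.sqrt (2 * ε)) ^ n ≤ ‖P n (1 + ε)‖ := by
  obtain ⟨q, hPq, hqinit, hqrec⟩ := exists_real_of_rec (m := m)
    (P := fun n => P n (1 + ε)) (z := 1 + ε) (by omega) hp0.ne'
    (fun k hk => by push_cast; exact hPinit k hk _)
    (fun k hk => by rw [hPrec k hk]; push_cast; rfl)
  have hq := pos_and_le_succ_of_rec hm hp_nonneg hp_sum hp0 hp1 (by linarith) hqinit hqrec
  have hvar_nonneg : 0 ≤ ∑ j ∈ Finset.range (m + 1), (1 - (j : ℝ)) ^ 2 * p j :=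
    Finset.sum_nonneg fun j _ => mul_nonneg (sq_nonneg _) (hp_nonneg j)
  have hρ : 1 ≤ 1 + σ⁻¹ * √(2 * ε) := le_add_of_nonneg_right (by rw [hσ]; positivity)
  have hvar : (∑ j ∈ Finset.range (m + 1), (1 - (j : ℝ)) ^ 2 * p j) *
      (1 + σ⁻¹ * √(2 * ε) - 1) ^ 2 ≤ 2 * ε := by
    rw [add_sub_cancel_left, mul_pow, Real.sq_sqrt (by positivity), inv_pow, hσ,
      Real.sq_sqrt hvar_nonneg, ← mul_assoc]
    exact mul_le_of_le_one_left (by positivity) mul_inv_le_one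
  obtain ⟨δ, hδ, hgap⟩ := exists_pos_add_le_of_forall_lt isCompact_Icc
    ((continuousOn_stepGen m p).mono fun u hu => one_pos.trans_le hu.1)
    (stepGen_lt_one_add hp_nonneg hp_sum hp0 hmean hε hvar)
  obtain ⟨N, hN⟩ := exists_forall_mul_le_of_gap hm hp_nonneg hp0 hp1 hqrec
    (fun n => (hq n).1.le) (fun n => (hq n).2) hρ hδ hgap
  obtain ⟨c, hc, hcq⟩ := exists_pos_mul_pow_le (fun n => (hq n).1) (by linarith) hN
  refine ⟨c, hc, fun n => ?_⟩
  rw [hPq n, Complex.norm_real, Real.norm_of_nonneg (hq n).1.le]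
  exact hcq n
end

section
/- For every ε > 0 and every n ≥ 0, the value P_n(1+ε) is a positive real number, it satisfies P_{n+1}(1+ε) ≥ (1+ε)·P_n(1+ε), and consequently P_n(1+ε) ≥ (1+ε)^n for all n ≥ 0. -/
/-- For every ε > 0 and every n ≥ 0, the value P_n(1+ε) is a positive real
number, it satisfies P_{n+1}(1+ε) ≥ (1+ε)·P_n(1+ε), and consequently
P_n(1+ε) ≥ (1+ε)^n for all n ≥ 0. -/
theorem stmt_7
    (m : ℕ) (hm : 2 ≤ m)
    (p : ℕ → ℝ)
    (hp_nonneg : ∀ j, 0 ≤ p j)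
    (hp_sum : ∑ j ∈ Finset.range (m + 1), p j = 1)
    (hp0 : 0 < p 0)
    (hp1 : p 1 = 0)
    (hmean : ∑ j ∈ Finset.range (m + 1), (1 - (j : ℝ)) * p j = 0)
    (P : ℕ → ℂ → ℂ)
    (hPinit : ∀ k, k < m → ∀ z : ℂ, P k z = z ^ k)
    (hPrec : ∀ k, m - 1 ≤ k → ∀ z : ℂ, P (k + 1) z =
      z / (p 0 : ℂ) * P k z
        - ∑ j ∈ Finset.Icc 2 m, ((p j / p 0 : ℝ) : ℂ) * P (k + 1 - j) z)
    (ε : ℝ) (hε : 0 < ε) :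
    ∃ x : ℕ → ℝ,
      (∀ n : ℕ, P n (1 + ε) = (x n : ℂ)) ∧
      (∀ n : ℕ, 0 < x n) ∧
      (∀ n : ℕ, (1 + ε) * x n ≤ x (n + 1)) ∧
      (∀ n : ℕ, (1 + ε) ^ n ≤ x n) := by
  have hz0 : (0:ℝ) < 1 + ε := by linarith
  have hz1 : (1:ℝ) ≤ 1 + ε := by linarith
  set z : ℝ := 1 + ε with hzdef
  set c : ℂ := 1 + (ε : ℂ) with hcdef
  have hcz : c = ((z : ℝ) : ℂ) := by rw [hcdef, hzdef]; push_cast; ring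
  have hp0le : p 0 ≤ 1 := by
    rw [← hp_sum]
    exact Finset.single_le_sum (fun j _ => hp_nonneg j) (by simp)
  have hsum2 : ∑ j ∈ Finset.Icc 2 m, p j = 1 - p 0 := by
    have h : Finset.range (m+1) = insert 0 (insert 1 (Finset.Icc 2 m)) := by
      ext j; simp [Finset.mem_range, Finset.mem_Icc]; omega
    rw [h, Finset.sum_insert (by simp [Finset.mem_Icc]),
      Finset.sum_insert (by simp [Finset.mem_Icc]), hp1] at hp_sum
    linarith
  have hp0ne : ((p 0 : ℝ) : ℂ) ≠ 0 := by
    exact_mod_cast Complex.ofReal_ne_zero.mpr hp0.ne'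
  have key : ∀ n : ℕ, P n c = ((P n c).re : ℂ) ∧ 0 < (P n c).re ∧
      ∀ i, i < n → z * (P i c).re ≤ (P (i+1) c).re := by
    intro n
    induction n using Nat.strong_induction_on with
    | _ n IH =>
      by_cases hn : n < m
      · have h1 : P n c = ((z ^ n : ℝ) : ℂ) := by
          rw [hPinit n hn, hcz, Complex.ofReal_pow]
        have hre : (P n c).re = z ^ n := by rw [h1, Complex.ofReal_re]
        refine ⟨by rw [hre, h1], by rw [hre]; positivity, ?_⟩
        intro i hi
        have hri : (P i c).re = z ^ i := by
          rw [hPinit i (by omega), hcz, ← Complex.ofReal_pow, Complex.ofReal_re]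
        have hri1 : (P (i+1) c).re = z ^ (i+1) := by
          rw [hPinit (i+1) (by omega), hcz, ← Complex.ofReal_pow, Complex.ofReal_re]
        rw [hri, hri1, pow_succ, mul_comm]
      · push_neg at hn
        obtain ⟨k, rfl⟩ : ∃ k, n = k + 1 := ⟨n - 1, by omega⟩
        have hmk : m - 1 ≤ k := by omega
        have hk1 : 1 ≤ k := by omega
        obtain ⟨hPk, hxk, hmono⟩ := IH k (by omega)
        have hposall : ∀ i, i ≤ k → 0 < (P i c).re := fun i hi => (IH i (by omega)).2.1
        have hrealall : ∀ i, i ≤ k → P i c = ((P i c).re : ℂ) := fun i hi => (IH i (by omega)).1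
        have step : ∀ i, i < k → (P i c).re ≤ (P (i+1) c).re := fun i hi =>
          le_trans (le_mul_of_one_le_left (hposall i hi.le).le hz1) (hmono i hi)
        have mono : ∀ b, b ≤ k → ∀ a, a ≤ b → (P a c).re ≤ (P b c).re := by
          intro b
          induction b with
          | zero =>
            intro _ a ha
            have ha0 : a = 0 := by omega
            subst ha0
            exact le_rfl
          | succ b ihb =>
            intro hb a ha
            rcases eq_or_lt_of_le ha with rfl | h
            · exact le_refl _
            · exact le_trans (ihb (by omega) a (by omega)) (step b (by omega))
        set t : ℝ := (P (k-1) c).re with htdef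
        have ht : z * t ≤ (P k c).re := by
          have := hmono (k-1) (by omega)
          rwa [Nat.sub_add_cancel hk1] at this
        have ht0 : 0 < t := hposall (k-1) (by omega)
        have sumbound : ∑ j ∈ Finset.Icc 2 m, p j * (P (k+1-j) c).re ≤ (1 - p 0) * t := by
          rw [← hsum2, Finset.sum_mul]
          refine Finset.sum_le_sum fun j hj => ?_
          have hj2 : 2 ≤ j := (Finset.mem_Icc.mp hj).1
          exact mul_le_mul_of_nonneg_left
            (mono (k-1) (by omega) (k+1-j) (by omega)) (hp_nonneg j)
        set y : ℝ := (z * (P k c).re - ∑ j ∈ Finset.Icc 2 m, p j * (P (k+1-j) c).re) / p 0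
          with hydef
        have hPn : P (k+1) c = (y : ℂ) := by
          rw [hPrec k hmk c, hPk, Finset.sum_congr rfl
            (fun j hj => by
              rw [hrealall (k+1-j) (by
                have hj2 : 2 ≤ j := (Finset.mem_Icc.mp hj).1; omega)]),
            hydef, hcz]
          push_cast
          rw [sub_div, Finset.sum_div]
          congr 1
          · ring
          · exact Finset.sum_congr rfl fun j _ => by ring
        have hxn : (P (k+1) c).re = y := by rw [hPn, Complex.ofReal_re]
        have hmain : z * (P k c).re ≤ y := by
          rw [hydef, le_div_iff₀ hp0]
          set a : ℝ := (P k c).re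
          have h1 : t ≤ z * a := by nlinarith
          have h2 : (0:ℝ) ≤ (1 - p 0) * (z * a - t) :=
            mul_nonneg (by linarith) (by linarith)
          nlinarith [sumbound]
        refine ⟨by rw [hxn]; exact hPn, by rw [hxn]; nlinarith, ?_⟩
        intro i hi
        rcases Nat.lt_succ_iff_lt_or_eq.mp hi with h | rfl
        · exact hmono i h
        · rw [hxn]; exact hmain
  refine ⟨fun n => (P n c).re, fun n => (key n).1, fun n => (key n).2.1,
    fun n => (key (n+1)).2.2 n (by omega), ?_⟩
  intro n
  induction n with
  | zero => simp [hPinit 0 (by omega)]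
  | succ n ih =>
    calc z ^ (n+1) = z * z ^ n := by rw [pow_succ, mul_comm]
    _ ≤ z * (P n c).re := by exact mul_le_mul_of_nonneg_left ih hz0.le
    _ ≤ (P (n+1) c).re := (key (n+1)).2.2 n (by omega)
end

section
/- For every ε > 0 there exists a real number r with r ≥ 1 + σ^{−1}·√(2ε) such that Q_{1+ε}(r) = 0, i.e., the characteristic polynomial at z = 1+ε has a real root of size at least 1 + σ^{−1}·√(2ε). -/
private lemma aux_pow_ineq (x : ℝ) (hx : 0 ≤ x) :
    ∀ k : ℕ, 2 ≤ (1 + x) ^ k * (2 - 2 * (k : ℝ) * x + (k : ℝ) * ((k : ℝ) + 1) * x ^ 2) := by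
  intro k
  induction k with
  | zero => simp
  | succ k ih =>
    have h1 : (0:ℝ) ≤ (1 + x) ^ k := by positivity
    have key : (2 - 2 * (k : ℝ) * x + (k : ℝ) * ((k : ℝ) + 1) * x ^ 2)
        ≤ (1 + x) * (2 - 2 * ((k:ℝ) + 1) * x + ((k:ℝ) + 1) * (((k:ℝ) + 1) + 1) * x ^ 2) := by
      have hk : (0:ℝ) ≤ (k:ℝ) := Nat.cast_nonneg k
      have hx3 : (0:ℝ) ≤ x ^ 3 := by positivity
      nlinarith [mul_nonneg hk hx3, mul_nonneg (mul_nonneg hk hk) hx3, hx3]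
    calc (2:ℝ) ≤ (1 + x) ^ k * (2 - 2 * (k : ℝ) * x + (k : ℝ) * ((k : ℝ) + 1) * x ^ 2) := ih
      _ ≤ (1 + x) ^ k * ((1 + x) * (2 - 2 * ((k:ℝ) + 1) * x + ((k:ℝ) + 1) * (((k:ℝ) + 1) + 1) * x ^ 2)) :=
          mul_le_mul_of_nonneg_left key h1
      _ = (1 + x) ^ (k + 1) * (2 - 2 * ((k:ℝ) + 1) * x + ((k:ℝ) + 1) * (((k:ℝ) + 1) + 1) * x ^ 2) := by
          ring
      _ = (1 + x) ^ (k + 1) * (2 - 2 * ((k+1 : ℕ) : ℝ) * x + ((k+1:ℕ) : ℝ) * (((k+1:ℕ) : ℝ) + 1) * x ^ 2) := by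
          push_cast; ring

/-- For every ε > 0 there exists a real number r with
r ≥ 1 + σ^{−1}·√(2ε) such that Q_{1+ε}(r) = 0, i.e., the characteristic polynomial at
z = 1+ε has a real root of size at least 1 + σ^{−1}·√(2ε). -/
theorem stmt_8
    (m : ℕ) (hm : 2 ≤ m)
    (p : ℕ → ℝ)
    (hp_nonneg : ∀ j, 0 ≤ p j)
    (hp_sum : ∑ j ∈ Finset.range (m + 1), p j = 1)
    (hp0 : 0 < p 0)
    (hp1 : p 1 = 0)
    (hmean : ∑ j ∈ Finset.range (m + 1), (1 - (j : ℝ)) * p j = 0)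
    (σ : ℝ)
    (hσ : σ = Real.sqrt (∑ j ∈ Finset.range (m + 1), (1 - (j : ℝ)) ^ 2 * p j))
    (Q : ℂ → ℂ → ℂ)
    (hQ : ∀ z r : ℂ, Q z r = r ^ m - z / (p 0 : ℂ) * r ^ (m - 1)
      + ∑ j ∈ Finset.Icc 2 m, ((p j / p 0 : ℝ) : ℂ) * r ^ (m - j))
    (ε : ℝ) (hε : 0 < ε) :
    ∃ r : ℝ, 1 + σ⁻¹ * Real.sqrt (2 * ε) ≤ r ∧ Q (1 + ε) (r : ℂ) = 0 := by
  -- splitting of sums over range (m+1)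
  have hsplit : ∀ f : ℕ → ℝ, ∑ j ∈ Finset.range (m + 1), f j
      = f 0 + f 1 + ∑ j ∈ Finset.Icc 2 m, f j := by
    intro f
    have hset : Finset.range (m + 1) = insert 0 (insert 1 (Finset.Icc 2 m)) := by
      ext j
      simp only [Finset.mem_range, Finset.mem_insert, Finset.mem_Icc]
      omega
    rw [hset, Finset.sum_insert (by simp), Finset.sum_insert (by simp)]
    ring
  -- key sums
  set S : ℝ := ∑ j ∈ Finset.range (m + 1), (1 - (j : ℝ)) ^ 2 * p j with hS
  have hA : ∑ j ∈ Finset.Icc 2 m, p j = 1 - p 0 := by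
    have := hsplit p
    rw [hp_sum, hp1] at this
    linarith
  have hB : ∑ j ∈ Finset.Icc 2 m, ((j : ℝ) - 1) * p j = p 0 := by
    have h1 := hsplit (fun j => (1 - (j : ℝ)) * p j)
    rw [hmean] at h1
    simp only [Nat.cast_zero, Nat.cast_one, hp1] at h1
    have h2 : ∑ j ∈ Finset.Icc 2 m, ((j : ℝ) - 1) * p j
        = -∑ j ∈ Finset.Icc 2 m, (1 - (j : ℝ)) * p j := by
      rw [← Finset.sum_neg_distrib]
      exact Finset.sum_congr rfl fun j _ => by ring
    rw [h2]; linarith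
  have hC : ∑ j ∈ Finset.Icc 2 m, (j : ℝ) * ((j : ℝ) - 1) * p j = S := by
    have h1 := hsplit (fun j => (j : ℝ) * ((j : ℝ) - 1) * p j)
    simp only [Nat.cast_zero, Nat.cast_one, hp1] at h1
    have h2 : ∑ j ∈ Finset.range (m + 1), (j : ℝ) * ((j : ℝ) - 1) * p j
        = S - ∑ j ∈ Finset.range (m + 1), (1 - (j : ℝ)) * p j := by
      rw [hS, ← Finset.sum_sub_distrib]
      exact Finset.sum_congr rfl fun j _ => by ring
    rw [hmean] at h2
    rw [h2] at h1
    linarith [h1]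
  -- positivity of S and σ
  have hSpos : 0 < S := by
    have h2 : ∑ j ∈ Finset.Icc 2 m, ((j : ℝ) - 1) * p j
        ≤ ∑ j ∈ Finset.Icc 2 m, (j : ℝ) * ((j : ℝ) - 1) * p j := by
      apply Finset.sum_le_sum
      intro j hj
      rw [Finset.mem_Icc] at hj
      have hj2 : (2 : ℝ) ≤ (j : ℝ) := by exact_mod_cast hj.1
      nlinarith [mul_nonneg (mul_nonneg (by linarith : (0:ℝ) ≤ (j:ℝ) - 1)
        (by linarith : (0:ℝ) ≤ (j:ℝ) - 1)) (hp_nonneg j)]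
    rw [hC] at h2
    rw [hB] at h2
    linarith
  have hσpos : 0 < σ := by rw [hσ]; exact Real.sqrt_pos.mpr hSpos
  have hσsq : σ ^ 2 = S := by rw [hσ]; exact Real.sq_sqrt hSpos.le
  -- set up x and r0
  set x : ℝ := σ⁻¹ * Real.sqrt (2 * ε) with hxdef
  have hx : 0 ≤ x := by positivity
  have hx2 : S * x ^ 2 = 2 * ε := by
    have : x ^ 2 = σ⁻¹ ^ 2 * (2 * ε) := by
      rw [hxdef, mul_pow, Real.sq_sqrt (by positivity)]
    rw [this, ← hσsq]
    field_simp
  set r0 : ℝ := 1 + x with hr0def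
  have hr0pos : (0:ℝ) < r0 := by rw [hr0def]; linarith
  -- the real function
  set F : ℝ → ℝ := fun r => p 0 * r ^ m - (1 + ε) * r ^ (m - 1)
    + ∑ j ∈ Finset.Icc 2 m, p j * r ^ (m - j) with hF
  -- F r0 ≤ 0
  have hFr0 : F r0 ≤ 0 := by
    have hterm : ∀ j ∈ Finset.Icc 2 m,
        p j * r0 ^ (m - j) ≤ p j * (r0 ^ (m - 1)
          * (1 - ((j:ℝ) - 1) * x + (j:ℝ) * ((j:ℝ) - 1) * x ^ 2 / 2)) := by
      intro j hj
      rw [Finset.mem_Icc] at hj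
      apply mul_le_mul_of_nonneg_left _ (hp_nonneg j)
      have haux := aux_pow_ineq x hx (j - 1)
      have hcast : ((j - 1 : ℕ) : ℝ) = (j : ℝ) - 1 := by
        have : (1:ℕ) ≤ j := by omega
        push_cast [this]; ring
      rw [hcast] at haux
      have h1 : 1 ≤ (1 + x) ^ (j - 1)
          * (1 - ((j:ℝ) - 1) * x + (j:ℝ) * ((j:ℝ) - 1) * x ^ 2 / 2) := by
        nlinarith [haux]
      have h2 := mul_le_mul_of_nonneg_left h1 (pow_nonneg (by linarith : (0:ℝ) ≤ 1 + x) (m - j))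
      rw [mul_one] at h2
      have h3 : (1 + x) ^ (m - j) * ((1 + x) ^ (j - 1)
          * (1 - ((j:ℝ) - 1) * x + (j:ℝ) * ((j:ℝ) - 1) * x ^ 2 / 2))
          = (1 + x) ^ (m - 1)
          * (1 - ((j:ℝ) - 1) * x + (j:ℝ) * ((j:ℝ) - 1) * x ^ 2 / 2) := by
        rw [← mul_assoc, ← pow_add]
        congr 2
        omega
      rw [h3] at h2
      rw [hr0def]
      exact h2
    have hsum := Finset.sum_le_sum hterm
    have hexp : ∑ j ∈ Finset.Icc 2 m, p j * (r0 ^ (m - 1)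
        * (1 - ((j:ℝ) - 1) * x + (j:ℝ) * ((j:ℝ) - 1) * x ^ 2 / 2))
        = r0 ^ (m - 1) * ((1 - p 0) - x * p 0 + x ^ 2 / 2 * S) := by
      have hc : ∀ j ∈ Finset.Icc 2 m, p j * (r0 ^ (m - 1)
          * (1 - ((j:ℝ) - 1) * x + (j:ℝ) * ((j:ℝ) - 1) * x ^ 2 / 2))
          = r0 ^ (m - 1) * p j - (r0 ^ (m - 1) * x) * (((j:ℝ) - 1) * p j)
            + (r0 ^ (m - 1) * x ^ 2 / 2) * ((j:ℝ) * ((j:ℝ) - 1) * p j) := by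
        intro j _; ring
      rw [Finset.sum_congr rfl hc, Finset.sum_add_distrib, Finset.sum_sub_distrib,
        ← Finset.mul_sum, ← Finset.mul_sum, ← Finset.mul_sum, hA, hB, hC]
      ring
    rw [hexp] at hsum
    have hpow : r0 ^ m = r0 ^ (m - 1) * r0 := by
      rw [← pow_succ]
      congr 1
      omega
    have hFle : F r0 ≤ p 0 * r0 ^ m - (1 + ε) * r0 ^ (m - 1)
        + r0 ^ (m - 1) * ((1 - p 0) - x * p 0 + x ^ 2 / 2 * S) := by
      rw [hF]; dsimp only; linarith
    have heq : p 0 * r0 ^ m - (1 + ε) * r0 ^ (m - 1)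
        + r0 ^ (m - 1) * ((1 - p 0) - x * p 0 + x ^ 2 / 2 * S)
        = r0 ^ (m - 1) * (S * x ^ 2 / 2 - ε) := by
      rw [hpow, hr0def]; ring
    rw [heq, hx2] at hFle
    have : (2 * ε / 2 - ε) = 0 := by ring
    rw [this, mul_zero] at hFle
    exact hFle
  -- F R ≥ 0 for large R
  set R : ℝ := max r0 ((1 + ε) / p 0) with hRdef
  have hr0R : r0 ≤ R := le_max_left _ _
  have hRpos : 0 < R := lt_of_lt_of_le hr0pos hr0R
  have hFR : 0 ≤ F R := by
    have h1 : (1 + ε) ≤ p 0 * R := by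
      have : (1 + ε) / p 0 ≤ R := le_max_right _ _
      calc (1 + ε) = p 0 * ((1 + ε) / p 0) := by field_simp
        _ ≤ p 0 * R := mul_le_mul_of_nonneg_left this hp0.le
    have hsum : 0 ≤ ∑ j ∈ Finset.Icc 2 m, p j * R ^ (m - j) :=
      Finset.sum_nonneg fun j _ => mul_nonneg (hp_nonneg j) (pow_nonneg hRpos.le _)
    have hpow : R ^ m = R ^ (m - 1) * R := by
      rw [← pow_succ]; congr 1; omega
    have h2 : 0 ≤ p 0 * R ^ m - (1 + ε) * R ^ (m - 1) := by
      rw [hpow]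
      have := mul_le_mul_of_nonneg_left h1 (pow_nonneg hRpos.le (m - 1))
      nlinarith [this]
    rw [hF]; dsimp only; linarith
  -- continuity and IVT
  have hcont : Continuous F := by
    rw [hF]
    apply Continuous.add
    · exact ((continuous_const.mul (continuous_pow m)).sub
        (continuous_const.mul (continuous_pow (m - 1))))
    · exact continuous_finset_sum _ fun j _ => continuous_const.mul (continuous_pow (m - j))
  have hIVT := intermediate_value_Icc hr0R hcont.continuousOn
  have hmem : (0:ℝ) ∈ Set.Icc (F r0) (F R) := ⟨hFr0, hFR⟩
  obtain ⟨c, hc, hFc⟩ := hIVT hmem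
  refine ⟨c, hc.1, ?_⟩
  -- conclude for Q
  have hp0c : (p 0 : ℂ) ≠ 0 := by exact_mod_cast hp0.ne'
  have hmul : (p 0 : ℂ) * Q (1 + ε) (c : ℂ) = ((F c : ℝ) : ℂ) := by
    rw [hQ]
    have hsumc : (p 0 : ℂ) * ∑ j ∈ Finset.Icc 2 m, ((p j / p 0 : ℝ) : ℂ) * (c:ℂ) ^ (m - j)
        = ∑ j ∈ Finset.Icc 2 m, ((p j : ℝ) : ℂ) * (c:ℂ) ^ (m - j) := by
      rw [Finset.mul_sum]
      refine Finset.sum_congr rfl fun j _ => ?_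
      push_cast
      field_simp
    have h4 : (p 0 : ℂ) * ((1 + (ε:ℂ)) / (p 0 : ℂ) * (c:ℂ) ^ (m - 1))
        = (1 + (ε:ℂ)) * (c:ℂ) ^ (m - 1) := by field_simp
    rw [mul_add, hsumc, mul_sub, h4, hF]
    push_cast
    ring
  rw [hFc] at hmul
  push_cast at hmul
  rcases mul_eq_zero.mp hmul with h | h
  · exact absurd h hp0c
  · exact h
end

section
/- One has the identity Σ_{j=2}^m (j(j−1)/2)·p_j = σ²/2, and for every real number r ≥ 1, p_0·r + Σ_{j=2}^m p_j·r^{1−j} ≤ 1 + (σ²/2)·(r−1)². -/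
lemma sum_split_aux (m : ℕ) (hm : 2 ≤ m) (f : ℕ → ℝ) :
    ∑ j ∈ Finset.range (m + 1), f j = f 0 + f 1 + ∑ j ∈ Finset.Icc 2 m, f j := by
  have h1 : Finset.Icc 2 m = Finset.Ico 2 (m + 1) := by
    rw [Finset.Ico_add_one_right_eq_Icc]
  rw [h1, Finset.range_eq_Ico,
    ← Finset.sum_Ico_consecutive f (by omega : 0 ≤ 2) (by omega : 2 ≤ m + 1)]
  have h2 : Finset.Ico 0 2 = Finset.range 2 := by rw [Finset.range_eq_Ico]
  rw [h2, Finset.sum_range_succ, Finset.sum_range_one]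

lemma key_aux (s : ℝ) (hs : 0 ≤ s) (n : ℕ) :
    1 ≤ (1 + s) ^ n * (1 - (n : ℝ) * s + (n : ℝ) * ((n : ℝ) + 1) / 2 * s ^ 2) := by
  induction n with
  | zero => simp
  | succ n ih =>
    push_cast
    have hpow : (0 : ℝ) ≤ (1 + s) ^ n := by positivity
    have hstep : (1 - (n : ℝ) * s + (n : ℝ) * ((n : ℝ) + 1) / 2 * s ^ 2)
        ≤ (1 + s) * (1 - ((n : ℝ) + 1) * s + ((n : ℝ) + 1) * (((n : ℝ) + 1) + 1) / 2 * s ^ 2) := by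
      have heq : (1 + s) * (1 - ((n : ℝ) + 1) * s + ((n : ℝ) + 1) * (((n : ℝ) + 1) + 1) / 2 * s ^ 2)
          = (1 - (n : ℝ) * s + (n : ℝ) * ((n : ℝ) + 1) / 2 * s ^ 2)
            + ((n : ℝ) + 1) * ((n : ℝ) + 2) / 2 * s ^ 3 := by ring
      have hpos : (0 : ℝ) ≤ ((n : ℝ) + 1) * ((n : ℝ) + 2) / 2 * s ^ 3 := by positivity
      linarith
    calc (1 : ℝ) ≤ (1 + s) ^ n * (1 - (n : ℝ) * s + (n : ℝ) * ((n : ℝ) + 1) / 2 * s ^ 2) := ih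
      _ ≤ (1 + s) ^ n * ((1 + s) * (1 - ((n : ℝ) + 1) * s + ((n : ℝ) + 1) * (((n : ℝ) + 1) + 1) / 2 * s ^ 2)) :=
          mul_le_mul_of_nonneg_left hstep hpow
      _ = (1 + s) ^ (n + 1) * (1 - ((n : ℝ) + 1) * s + ((n : ℝ) + 1) * (((n : ℝ) + 1) + 1) / 2 * s ^ 2) := by
          ring

/-- One has the identity Σ_{j=2}^m (j(j−1)/2)·p_j = σ²/2, and for every
real number r ≥ 1, p_0·r + Σ_{j=2}^m p_j·r^{1−j} ≤ 1 + (σ²/2)·(r−1)². -/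
theorem stmt_9
    (m : ℕ) (hm : 2 ≤ m)
    (p : ℕ → ℝ)
    (hp_nonneg : ∀ j, 0 ≤ p j)
    (hp_sum : ∑ j ∈ Finset.range (m + 1), p j = 1)
    (hp0 : 0 < p 0)
    (hp1 : p 1 = 0)
    (hmean : ∑ j ∈ Finset.range (m + 1), (1 - (j : ℝ)) * p j = 0)
    (σ2 : ℝ)
    (hσ2 : σ2 = ∑ j ∈ Finset.range (m + 1), (1 - (j : ℝ)) ^ 2 * p j) :
    (∑ j ∈ Finset.Icc 2 m, ((j : ℝ) * ((j : ℝ) - 1) / 2) * p j = σ2 / 2) ∧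
    (∀ r : ℝ, 1 ≤ r →
      p 0 * r + ∑ j ∈ Finset.Icc 2 m, p j * r ^ ((1 : ℤ) - (j : ℤ))
        ≤ 1 + σ2 / 2 * (r - 1) ^ 2) := by
  -- full-range sum of j(j-1)/2 p_j equals σ2/2
  have hfull : ∑ j ∈ Finset.range (m + 1), ((j : ℝ) * ((j : ℝ) - 1) / 2) * p j = σ2 / 2 := by
    have : ∑ j ∈ Finset.range (m + 1), ((j : ℝ) * ((j : ℝ) - 1) / 2) * p j
        = (∑ j ∈ Finset.range (m + 1), (1 - (j : ℝ)) ^ 2 * p j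
           - ∑ j ∈ Finset.range (m + 1), (1 - (j : ℝ)) * p j) / 2 := by
      rw [← Finset.sum_sub_distrib, Finset.sum_div]
      exact Finset.sum_congr rfl fun j _ => by ring
    rw [this, hmean, hσ2]
    ring
  have hIcc : ∑ j ∈ Finset.Icc 2 m, ((j : ℝ) * ((j : ℝ) - 1) / 2) * p j = σ2 / 2 := by
    have := sum_split_aux m hm (fun j => ((j : ℝ) * ((j : ℝ) - 1) / 2) * p j)
    rw [hfull] at this
    simp only [Nat.cast_zero, Nat.cast_one] at this
    linarith [this]
  refine ⟨hIcc, fun r hr => ?_⟩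
  set s : ℝ := r - 1 with hsdef
  have hs : 0 ≤ s := by simp [hsdef]; linarith
  have hr1 : r = 1 + s := by ring
  -- termwise bound
  set F : ℕ → ℝ := fun j => p j * (1 + (1 - (j : ℝ)) * s + (j : ℝ) * ((j : ℝ) - 1) / 2 * s ^ 2)
    with hF
  have hterm : ∀ j ∈ Finset.Icc 2 m, p j * r ^ ((1 : ℤ) - (j : ℤ)) ≤ F j := by
    intro j hj
    have hj2 : 2 ≤ j := (Finset.mem_Icc.mp hj).1
    have hrpos : (0 : ℝ) < r := by linarith
    have hzpow : r ^ ((1 : ℤ) - (j : ℤ)) = (r ^ (j - 1))⁻¹ := by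
      have : (1 : ℤ) - (j : ℤ) = -((j - 1 : ℕ) : ℤ) := by
        push_cast [Nat.cast_sub (by omega : 1 ≤ j)]; ring
      rw [this, zpow_neg, zpow_natCast]
    have hkey := key_aux s hs (j - 1)
    have hcast : ((j - 1 : ℕ) : ℝ) = (j : ℝ) - 1 := by
      push_cast [Nat.cast_sub (by omega : 1 ≤ j)]; ring
    rw [hcast] at hkey
    have hA : ((j : ℝ) - 1) * (((j : ℝ) - 1) + 1) / 2 = (j : ℝ) * ((j : ℝ) - 1) / 2 := by ring
    rw [hA] at hkey
    have hbound : r ^ ((1 : ℤ) - (j : ℤ)) ≤ 1 + (1 - (j : ℝ)) * s + (j : ℝ) * ((j : ℝ) - 1) / 2 * s ^ 2 := by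
      rw [hzpow]
      have hppos : (0 : ℝ) < r ^ (j - 1) := pow_pos hrpos _
      rw [inv_le_iff_one_le_mul₀ hppos]
      have : (1 : ℝ) + (1 - (j : ℝ)) * s + (j : ℝ) * ((j : ℝ) - 1) / 2 * s ^ 2
          = 1 - ((j : ℝ) - 1) * s + (j : ℝ) * ((j : ℝ) - 1) / 2 * s ^ 2 := by ring
      rw [this]
      calc (1 : ℝ) ≤ (1 + s) ^ (j - 1) * (1 - ((j : ℝ) - 1) * s + (j : ℝ) * ((j : ℝ) - 1) / 2 * s ^ 2) := hkey
        _ = (1 - ((j : ℝ) - 1) * s + (j : ℝ) * ((j : ℝ) - 1) / 2 * s ^ 2) * r ^ (j - 1) := by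
            rw [hr1]; ring
    calc p j * r ^ ((1 : ℤ) - (j : ℤ))
        ≤ p j * (1 + (1 - (j : ℝ)) * s + (j : ℝ) * ((j : ℝ) - 1) / 2 * s ^ 2) :=
          mul_le_mul_of_nonneg_left hbound (hp_nonneg j)
      _ = F j := rfl
  -- sum of F over full range
  have hFsum : ∑ j ∈ Finset.range (m + 1), F j = 1 + σ2 / 2 * s ^ 2 := by
    have : ∑ j ∈ Finset.range (m + 1), F j
        = ∑ j ∈ Finset.range (m + 1), p j
          + (∑ j ∈ Finset.range (m + 1), (1 - (j : ℝ)) * p j) * s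
          + (∑ j ∈ Finset.range (m + 1), ((j : ℝ) * ((j : ℝ) - 1) / 2) * p j) * s ^ 2 := by
      rw [Finset.sum_mul, Finset.sum_mul, ← Finset.sum_add_distrib, ← Finset.sum_add_distrib]
      exact Finset.sum_congr rfl fun j _ => by simp only [hF]; ring
    rw [this, hp_sum, hmean, hfull]
    ring
  have hsplit := sum_split_aux m hm F
  have hF1 : F 1 = 0 := by simp [hF, hp1]
  have hF0 : F 0 = p 0 * r := by simp only [hF, Nat.cast_zero]; rw [hr1]; ring
  have hsum2 : ∑ j ∈ Finset.Icc 2 m, p j * r ^ ((1 : ℤ) - (j : ℤ)) ≤ ∑ j ∈ Finset.Icc 2 m, F j :=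
    Finset.sum_le_sum hterm
  have : p 0 * r + ∑ j ∈ Finset.Icc 2 m, F j = 1 + σ2 / 2 * s ^ 2 := by
    rw [← hF0, ← hFsum, hsplit, hF1]; ring
  linarith
end

section
/- Fix 0 < δ < 1 and let Ω_δ := { x + iy ∈ ℂ : x² + y²/δ² ≤ 1 } be the closed region enclosed by the ellipse with vertices ±1 and co-vertices ±iδ. If P is a complex polynomial of degree at most n such that |P(z)| ≤ 1 for all z ∈ Ω_δ, then |P(1+ε)| ≤ (1 + (3/(2δ))·ε)^n for all 0 < ε < 1. -/
/-!
Write `a = (1 + δ) / 2` and `b = (1 - δ) / 2`. The Joukowski-type map `J t = a t + b / t`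
sends the unit circle onto the boundary of `Ω_δ`, and `u ↦ u ^ n * P (J u⁻¹)` is a polynomial,
so the maximum modulus principle on the unit disc gives `‖P (J t)‖ ≤ ‖t‖ ^ n` for `‖t‖ ≥ 1`.
The point `1 + ε` is `J t` for the real root `t = (1 + ε + √((1 + ε) ^ 2 - 1 + δ ^ 2)) / (1 + δ)`
of `J t = 1 + ε`, which satisfies `1 ≤ t ≤ 1 + 3ε / (2δ)`.
-/

open Polynomial Finset

noncomputable def joukowskiNumerator {R : Type*} [CommSemiring R] (a b : R) (n : ℕ) (P : R[X]) :
    R[X] :=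
  ∑ k ∈ range (n + 1), C (P.coeff k) * (C a + C b * X ^ 2) ^ k * X ^ (n - k)

theorem eval_joukowskiNumerator {K : Type*} [Field K] (a b : K) {n : ℕ} {P : K[X]}
    (hP : P.natDegree ≤ n) {u : K} (hu : u ≠ 0) :
    (joukowskiNumerator a b n P).eval u = u ^ n * P.eval (a / u + b * u) := by
  rw [joukowskiNumerator, eval_finsetSum, eval_eq_sum_range' (Nat.lt_succ_of_le hP), mul_sum]
  refine sum_congr rfl fun k hk => ?_
  have hkn : k ≤ n := Nat.lt_succ_iff.mp (mem_range.mp hk)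
  have hz : a / u + b * u = (a + b * u ^ 2) / u := by field_simp
  have hun : u ^ n = u ^ (n - k) * u ^ k := by rw [← pow_add, Nat.sub_add_cancel hkn]
  simp only [eval_mul, eval_pow, eval_add, eval_C, eval_X, hz, div_pow, hun]
  field_simp

theorem norm_eval_joukowski_le_norm_pow (a b : ℂ) {n : ℕ} {P : ℂ[X]} (hP : P.natDegree ≤ n)
    (hbdry : ∀ w : ℂ, ‖w‖ = 1 → ‖P.eval (a * w + b / w)‖ ≤ 1) {t : ℂ} (ht : 1 ≤ ‖t‖) :
    ‖P.eval (a * t + b / t)‖ ≤ ‖t‖ ^ n := by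
  have ht0 : t ≠ 0 := norm_pos_iff.mp (one_pos.trans_le ht)
  set H := joukowskiNumerator a b n P
  have hH : ∀ u : ℂ, u ≠ 0 → ‖H.eval u‖ = ‖u‖ ^ n * ‖P.eval (a * u⁻¹ + b / u⁻¹)‖ := by
    intro u hu
    rw [eval_joukowskiNumerator a b hP hu, norm_mul, norm_pow, div_inv_eq_mul, ← div_eq_mul_inv]
  have hbdryH : ∀ w ∈ frontier (Metric.ball (0 : ℂ) 1), ‖H.eval w‖ ≤ 1 := by
    intro w hw
    rw [frontier_ball 0 one_ne_zero, mem_sphere_zero_iff_norm] at hw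
    rw [hH w (norm_ne_zero_iff.mp (hw ▸ one_ne_zero)), hw, one_pow, one_mul]
    exact hbdry _ (by rw [norm_inv, hw, inv_one])
  have hmax : ‖H.eval t⁻¹‖ ≤ 1 := by
    refine Complex.norm_le_of_forall_mem_frontier_norm_le Metric.isBounded_ball
      H.differentiable.diffContOnCl hbdryH ?_
    rw [closure_ball 0 one_ne_zero, mem_closedBall_zero_iff, norm_inv]
    exact inv_le_one_of_one_le₀ ht
  rw [hH _ (inv_ne_zero ht0), inv_inv, norm_inv, inv_pow] at hmax
  rwa [inv_mul_le_iff₀ (by positivity), mul_one] at hmax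

theorem re_im_ofReal_mul_add_div_of_norm_eq_one (a b : ℝ) {w : ℂ} (hw : ‖w‖ = 1) :
    ((a : ℂ) * w + b / w).re = (a + b) * w.re ∧ ((a : ℂ) * w + b / w).im = (a - b) * w.im := by
  have hinv : w⁻¹ = (starRingEnd ℂ) w := by
    rw [Complex.inv_def, ← Complex.sq_norm, hw]; simp
  rw [div_eq_mul_inv, hinv]
  constructor <;> simp <;> ring

theorem joukowski_ellipse_eq_one {δ : ℝ} (hδ : δ ≠ 0) {w : ℂ} (hw : ‖w‖ = 1) :
    let z : ℂ := ((1 + δ) / 2 : ℝ) * w + ((1 - δ) / 2 : ℝ) / w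
    z.re ^ 2 + z.im ^ 2 / δ ^ 2 = 1 := by
  obtain ⟨hre, him⟩ := re_im_ofReal_mul_add_div_of_norm_eq_one ((1 + δ) / 2) ((1 - δ) / 2) hw
  have hsq : w.re * w.re + w.im * w.im = 1 := by
    rw [← Complex.normSq_apply, ← Complex.sq_norm, hw, one_pow]
  intro z
  rw [show z.re = _ from hre, show z.im = _ from him,
    show (1 + δ) / 2 + (1 - δ) / 2 = 1 by ring, show (1 + δ) / 2 - (1 - δ) / 2 = δ by ring]
  field_simp
  linear_combination hsq

theorem joukowski_eq_of_sq_eq {K : Type*} [Field K] [CharZero K] {δ x s : K}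
    (hs : s ^ 2 = x ^ 2 - 1 + δ ^ 2) (hxs : x + s ≠ 0) (hδ : 1 + δ ≠ 0) :
    (1 + δ) / 2 * ((x + s) / (1 + δ)) + (1 - δ) / 2 / ((x + s) / (1 + δ)) = x := by
  field_simp
  linear_combination hs

theorem add_sqrt_div_one_add_le {δ ε : ℝ} (hδ0 : 0 < δ) (hδ1 : δ < 1) (hε : 0 ≤ ε) :
    (1 + ε + √(δ ^ 2 + 2 * ε + ε ^ 2)) / (1 + δ) ≤ 1 + 3 / (2 * δ) * ε := by
  have hs : √(δ ^ 2 + 2 * ε + ε ^ 2) ≤ δ + 3 * ε / (2 * δ) := by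
    rw [Real.sqrt_le_left (by positivity)]
    have hε_sq : ε ^ 2 ≤ 9 * ε ^ 2 / (4 * δ ^ 2) := by
      rw [le_div_iff₀ (by positivity)]
      nlinarith [mul_nonneg (sq_nonneg ε) (by nlinarith : (0 : ℝ) ≤ 9 - 4 * δ ^ 2)]
    field_simp at hε_sq ⊢
    nlinarith
  rw [div_le_iff₀ (by linarith)]
  field_simp at hs ⊢
  nlinarith

theorem stmt_11_general
    (δ : ℝ) (hδ0 : 0 < δ) (hδ1 : δ < 1)
    (n : ℕ) (P : Polynomial ℂ) (hdeg : P.degree ≤ n)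
    (hbound : ∀ z : ℂ, z.re ^ 2 + z.im ^ 2 / δ ^ 2 ≤ 1 → ‖P.eval z‖ ≤ 1)
    (ε : ℝ) (hε0 : 0 < ε) :
    ‖P.eval (1 + (ε : ℂ))‖ ≤ (1 + 3 / (2 * δ) * ε) ^ n := by
  set s := √(δ ^ 2 + 2 * ε + ε ^ 2)
  set t := (1 + ε + s) / (1 + δ)
  have hs_sq : s ^ 2 = (1 + ε) ^ 2 - 1 + δ ^ 2 := by
    rw [Real.sq_sqrt (by positivity)]; ring
  have hδs : δ ≤ s := Real.le_sqrt_of_sq_le (by nlinarith)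
  have ht : 1 ≤ t := by rw [one_le_div (by linarith)]; linarith
  have hJ : (((1 + δ) / 2 : ℝ) : ℂ) * t + ((1 - δ) / 2 : ℝ) / t = 1 + ε := by
    exact_mod_cast joukowski_eq_of_sq_eq hs_sq (by linarith) (by linarith)
  have hgrowth := norm_eval_joukowski_le_norm_pow _ _ (natDegree_le_iff_degree_le.mpr hdeg)
    (fun w hw => hbound _ (joukowski_ellipse_eq_one hδ0.ne' hw).le)
    (t := t) (by rwa [Complex.norm_real, Real.norm_of_nonneg (by linarith)])
  rw [hJ, Complex.norm_real, Real.norm_of_nonneg (by linarith)] at hgrowth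
  exact hgrowth.trans
    (pow_le_pow_left₀ (by linarith) (add_sqrt_div_one_add_le hδ0 hδ1 hε0.le) n)

/-- Fix 0 < δ < 1 and let Ω_δ := { x + iy ∈ ℂ : x² + y²/δ² ≤ 1 } be the
closed region enclosed by the ellipse with vertices ±1 and co-vertices ±iδ. If P is a
complex polynomial of degree at most n such that |P(z)| ≤ 1 for all z ∈ Ω_δ, then
|P(1+ε)| ≤ (1 + (3/(2δ))·ε)^n for all 0 < ε < 1. -/
theorem stmt_11
    (δ : ℝ) (hδ0 : 0 < δ) (hδ1 : δ < 1)
    (n : ℕ) (P : Polynomial ℂ) (hdeg : P.degree ≤ n)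
    (hbound : ∀ z : ℂ, z.re ^ 2 + z.im ^ 2 / δ ^ 2 ≤ 1 → ‖P.eval z‖ ≤ 1)
    (ε : ℝ) (hε0 : 0 < ε) (hε1 : ε < 1) :
    ‖P.eval (1 + (ε : ℂ))‖ ≤ (1 + 3 / (2 * δ) * ε) ^ n :=
  stmt_11_general δ hδ0 hδ1 n P hdeg hbound ε hε0
end

section
/- Fix ρ > 1 and let F_ρ := { (ρe^{iθ} + ρ^{−1}e^{−iθ})/(ρ + ρ^{−1}) : θ ∈ [0, 2π] } be the ellipse with vertices ±1 and co-vertices ±i(ρ−ρ^{−1})/(ρ+ρ^{−1}). If P is a complex polynomial of degree at most n such that |P(z)| ≤ 1 for all z ∈ F_ρ, then |P(1+ε)| ≤ (1 + (3(ρ²+1)/(2(ρ²−1)))·ε)^n for all 0 < ε < 1. -/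
/-!
With `j(u) = (ρu + ρ⁻¹u⁻¹) / (ρ + ρ⁻¹)`, which maps the unit circle onto `F_ρ`, the function
`w ↦ wⁿ P(j(w⁻¹))` is a polynomial bounded by `1` on the unit circle, so by the maximum modulus
principle `|P(j(u))| ≤ |u|ⁿ` whenever `|u| ≥ 1`. Choosing `t ≥ ρ` with
`t + t⁻¹ = (1 + ε)(ρ + ρ⁻¹)` gives `j(t/ρ) = 1 + ε`, and since `t ↦ t + t⁻¹` is increasing on
`[1, ∞)`, the bound `t ≤ ρ(1 + Cε)` follows from `(1 + x)⁻¹ ≥ 1 - x`.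
-/

open Polynomial Complex Set

theorem Polynomial.exists_eval_eq_pow_mul_eval_inv_add {K : Type*} [Field K] {P : K[X]} {n : ℕ}
    (hP : P.natDegree ≤ n) (a c : K) :
    ∃ Q : K[X], ∀ w ≠ 0, Q.eval w = w ^ n * P.eval (a * w⁻¹ + c * w) := by
  refine ⟨∑ k ∈ Finset.range (n + 1), C (P.coeff k) * X ^ (n - k) * (C a + C c * X ^ 2) ^ k,
    fun w hw => ?_⟩
  have hw' : w * (a * w⁻¹ + c * w) = a + c * w ^ 2 := by
    field_simp
  rw [eval_eq_sum_range' (Nat.lt_succ_of_le hP), Finset.mul_sum, eval_finsetSum]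
  refine Finset.sum_congr rfl fun k hk => ?_
  have hwn : w ^ n = w ^ (n - k) * w ^ k := by
    rw [← pow_add, Nat.sub_add_cancel (Nat.lt_succ_iff.mp (Finset.mem_range.mp hk))]
  simp only [eval_mul, eval_pow, eval_C, eval_X, eval_add]
  rw [hwn, ← hw', mul_pow]
  ring

theorem Complex.exists_mem_Icc_exp_I_mul_eq {u : ℂ} (hu : ‖u‖ = 1) :
    ∃ θ ∈ Icc (0 : ℝ) (2 * Real.pi), exp (I * θ) = u := by
  obtain ⟨θ, rfl⟩ := (norm_eq_one_iff u).mp hu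
  have hper : Function.Periodic (fun θ : ℝ => exp (θ * I)) (2 * Real.pi) := fun θ => by
    simpa using exp_mul_I_periodic θ
  obtain ⟨φ, hφ, hθφ⟩ := hper.exists_mem_Ico₀ Real.two_pi_pos θ
  exact ⟨φ, Ico_subset_Icc_self hφ, by rw [mul_comm, hθφ]⟩

theorem Polynomial.norm_eval_le_of_forall_norm_eq_one {Q : ℂ[X]} {M : ℝ}
    (hQ : ∀ w : ℂ, ‖w‖ = 1 → ‖Q.eval w‖ ≤ M) {w : ℂ} (hw : ‖w‖ ≤ 1) : ‖Q.eval w‖ ≤ M := by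
  refine norm_le_of_forall_mem_frontier_norm_le (U := Metric.ball 0 1) Metric.isBounded_ball
    Q.differentiable.diffContOnCl (fun z hz => hQ z ?_) ?_
  · rwa [frontier_ball _ one_ne_zero, mem_sphere_zero_iff_norm] at hz
  · rwa [closure_ball _ one_ne_zero, Metric.mem_closedBall, dist_zero_right]

noncomputable def joukowskiEllipse (ρ : ℝ) (u : ℂ) : ℂ :=
  (ρ * u + (ρ : ℂ)⁻¹ * u⁻¹) / (ρ + (ρ : ℂ)⁻¹)

theorem norm_eval_joukowskiEllipse_le {ρ : ℝ} {n : ℕ} {P : ℂ[X]}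
    (hP : P.natDegree ≤ n) (hbound : ∀ u : ℂ, ‖u‖ = 1 → ‖P.eval (joukowskiEllipse ρ u)‖ ≤ 1)
    {u : ℂ} (hu : 1 ≤ ‖u‖) : ‖P.eval (joukowskiEllipse ρ u)‖ ≤ ‖u‖ ^ n := by
  obtain ⟨Q, hQ⟩ := P.exists_eval_eq_pow_mul_eval_inv_add hP
    (ρ / (ρ + (ρ : ℂ)⁻¹)) ((ρ : ℂ)⁻¹ / (ρ + (ρ : ℂ)⁻¹))
  have hj : ∀ w ≠ (0 : ℂ), Q.eval w = w ^ n * P.eval (joukowskiEllipse ρ w⁻¹) := by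
    intro w hw
    rw [hQ w hw, joukowskiEllipse, inv_inv, add_div, mul_div_right_comm,
      mul_div_right_comm (ρ : ℂ)⁻¹]
  have hu0 : u ≠ 0 := norm_pos_iff.mp (one_pos.trans_le hu)
  have hQu := Q.norm_eval_le_of_forall_norm_eq_one (M := 1) (w := u⁻¹) (fun w hw => ?_) ?_
  · rw [hj _ (inv_ne_zero hu0), inv_inv, norm_mul, norm_pow, norm_inv, inv_pow] at hQu
    rwa [inv_mul_le_iff₀ (by positivity), mul_one] at hQu
  · have hw0 : w ≠ 0 := norm_ne_zero_iff.mp (by rw [hw]; exact one_ne_zero)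
    rw [hj w hw0, norm_mul, norm_pow, hw, one_pow, one_mul]
    exact hbound _ (by rw [norm_inv, hw, inv_one])
  · rw [norm_inv]
    exact inv_le_one_of_one_le₀ hu

theorem strictMonoOn_add_inv : StrictMonoOn (fun x : ℝ => x + x⁻¹) (Ici 1) := by
  intro s hs t ht hst
  simp only [mem_Ici] at hs ht
  have hst1 : 1 < s * t := by nlinarith
  have hdiff : t + t⁻¹ - (s + s⁻¹) = (t - s) * (s * t - 1) / (s * t) := by
    field_simp
    ring
  have hpos : 0 < (t - s) * (s * t - 1) / (s * t) :=
    div_pos (mul_pos (by linarith) (by linarith)) (by linarith)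
  show s + s⁻¹ < t + t⁻¹
  linarith

theorem exists_one_le_add_inv_eq {A : ℝ} (hA : 2 ≤ A) : ∃ t : ℝ, 1 ≤ t ∧ t + t⁻¹ = A := by
  have hD : 0 ≤ A ^ 2 - 4 := by nlinarith
  set q := Real.sqrt (A ^ 2 - 4)
  have hq : q ^ 2 = A ^ 2 - 4 := Real.sq_sqrt hD
  have hq0 : 0 ≤ q := Real.sqrt_nonneg _
  refine ⟨(A + q) / 2, by linarith, ?_⟩
  have : ((A + q) / 2)⁻¹ = (A - q) / 2 := by
    refine inv_eq_of_mul_eq_one_right ?_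
    linear_combination -hq / 4
  rw [this]
  ring

theorem add_add_mul_sub_le_mul_one_add_add_inv {ρ x : ℝ} (hρ : 0 < ρ) (hx : 0 ≤ x) :
    ρ + ρ⁻¹ + x * (ρ - ρ⁻¹) ≤ ρ * (1 + x) + (ρ * (1 + x))⁻¹ := by
  have h : 1 - x ≤ (1 + x)⁻¹ := by
    rw [← one_div, le_div_iff₀ (by positivity)]
    nlinarith
  calc ρ + ρ⁻¹ + x * (ρ - ρ⁻¹) = ρ * (1 + x) + ρ⁻¹ * (1 - x) := by ring
    _ ≤ ρ * (1 + x) + ρ⁻¹ * (1 + x)⁻¹ := by gcongr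
    _ = ρ * (1 + x) + (ρ * (1 + x))⁻¹ := by rw [mul_inv]

theorem exists_mem_Icc_add_inv_eq {ρ ε : ℝ} (hρ : 1 < ρ) (hε : 0 ≤ ε) :
    ∃ t ∈ Icc ρ (ρ * (1 + 3 * (ρ ^ 2 + 1) / (2 * (ρ ^ 2 - 1)) * ε)),
      t + t⁻¹ = (1 + ε) * (ρ + ρ⁻¹) := by
  have hρ0 : 0 < ρ := one_pos.trans hρ
  set C := 3 * (ρ ^ 2 + 1) / (2 * (ρ ^ 2 - 1))
  have hρsq : 0 < ρ ^ 2 - 1 := by nlinarith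
  have hCε : 0 ≤ C * ε := by positivity
  have hρ2 : 2 ≤ ρ + ρ⁻¹ := by
    have := mul_inv_cancel₀ hρ0.ne'
    nlinarith
  obtain ⟨t, ht1, ht⟩ := exists_one_le_add_inv_eq (A := (1 + ε) * (ρ + ρ⁻¹)) (by nlinarith)
  have hB := add_add_mul_sub_le_mul_one_add_add_inv hρ0 hCε
  have hC : C * ε * (ρ - ρ⁻¹) = 3 / 2 * ε * (ρ + ρ⁻¹) := by
    simp only [C]
    field_simp
  refine ⟨t, ⟨?_, ?_⟩, ht⟩
  · rw [← strictMonoOn_add_inv.le_iff_le hρ.le ht1]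
    simp only [ht]
    nlinarith
  · rw [← strictMonoOn_add_inv.le_iff_le ht1 (by simp only [mem_Ici]; nlinarith)]
    simp only [ht]
    nlinarith

theorem stmt_12_general
    (ρ : ℝ) (hρ : 1 < ρ)
    (n : ℕ) (P : Polynomial ℂ) (hdeg : P.degree ≤ n)
    (hbound : ∀ z ∈ (fun θ : ℝ =>
        ((ρ : ℂ) * Complex.exp (Complex.I * θ)
          + (ρ : ℂ)⁻¹ * Complex.exp (-(Complex.I * θ))) / ((ρ : ℂ) + (ρ : ℂ)⁻¹)) ''
        Set.Icc (0 : ℝ) (2 * Real.pi),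
      ‖P.eval z‖ ≤ 1)
    (ε : ℝ) (hε0 : 0 < ε) :
    ‖P.eval (1 + (ε : ℂ))‖ ≤ (1 + 3 * (ρ ^ 2 + 1) / (2 * (ρ ^ 2 - 1)) * ε) ^ n := by
  have hρ0 : 0 < ρ := one_pos.trans hρ
  have hellipse : ∀ u : ℂ, ‖u‖ = 1 → ‖P.eval (joukowskiEllipse ρ u)‖ ≤ 1 := fun u hu => by
    obtain ⟨θ, hθ, rfl⟩ := exists_mem_Icc_exp_I_mul_eq hu
    exact hbound _ ⟨θ, hθ, by simp only [joukowskiEllipse, exp_neg]⟩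
  obtain ⟨t, ⟨hρt, htB⟩, ht⟩ := exists_mem_Icc_add_inv_eq hρ hε0.le
  have ht0 : 0 < t := hρ0.trans_le hρt
  have hj : joukowskiEllipse ρ (t / ρ : ℝ) = 1 + ε := by
    have hs : (ρ : ℂ) + (ρ : ℂ)⁻¹ ≠ 0 := by exact_mod_cast (by positivity : 0 < ρ + ρ⁻¹).ne'
    have h : ρ * (t / ρ) + ρ⁻¹ * (t / ρ)⁻¹ = (1 + ε) * (ρ + ρ⁻¹) := by
      rw [← ht]
      field_simp
    rw [joukowskiEllipse, div_eq_iff hs]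
    exact_mod_cast h
  have hu : ‖((t / ρ : ℝ) : ℂ)‖ = t / ρ := by
    rw [norm_real, Real.norm_of_nonneg (by positivity)]
  have hP := norm_eval_joukowskiEllipse_le (natDegree_le_of_degree_le hdeg) hellipse
    (hu ▸ (one_le_div hρ0).mpr hρt)
  rw [hj, hu] at hP
  refine hP.trans (pow_le_pow_left₀ (by positivity) ?_ n)
  rwa [div_le_iff₀' hρ0]

/-- Fix ρ > 1 and let F_ρ := { (ρe^{iθ} + ρ^{−1}e^{−iθ})/(ρ + ρ^{−1}) :
θ ∈ [0, 2π] } be the ellipse with vertices ±1 and co-vertices ±i(ρ−ρ^{−1})/(ρ+ρ^{−1}).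
If P is a complex polynomial of degree at most n such that |P(z)| ≤ 1 for all z ∈ F_ρ,
then |P(1+ε)| ≤ (1 + (3(ρ²+1)/(2(ρ²−1)))·ε)^n for all 0 < ε < 1. -/
theorem stmt_12
    (ρ : ℝ) (hρ : 1 < ρ)
    (n : ℕ) (P : Polynomial ℂ) (hdeg : P.degree ≤ n)
    (hbound : ∀ z ∈ (fun θ : ℝ =>
        ((ρ : ℂ) * Complex.exp (Complex.I * θ)
          + (ρ : ℂ)⁻¹ * Complex.exp (-(Complex.I * θ))) / ((ρ : ℂ) + (ρ : ℂ)⁻¹)) ''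
        Set.Icc (0 : ℝ) (2 * Real.pi),
      ‖P.eval z‖ ≤ 1)
    (ε : ℝ) (hε0 : 0 < ε) (hε1 : ε < 1) :
    ‖P.eval (1 + (ε : ℂ))‖ ≤ (1 + 3 * (ρ ^ 2 + 1) / (2 * (ρ ^ 2 - 1)) * ε) ^ n :=
  stmt_12_general ρ hρ n P hdeg hbound ε hε0
end

section
/- Let γ ∈ ℂ and ρ > 0 with |γ| ≥ ρ, and let n ∈ ℕ. Then: (a) every complex polynomial P of degree at most n with P(γ) = 1 satisfies sup_{|z| = ρ} |P(z)| ≥ (ρ/|γ|)^n; (b) the polynomial P(z) = (z/γ)^n satisfies P(γ) = 1 and sup_{|z| = ρ} |P(z)| = (ρ/|γ|)^n, so the bound in (a) is attained. -/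
/-!
Put `r = ‖γ‖ / ρ ≥ 1`. The reversed polynomial `Q(w) = wⁿ P(1/w)` is entire, so by the maximum
modulus principle on the closed ball of radius `1/ρ` (which contains `1/γ`) we get
`‖P γ‖ ≤ rⁿ · sup_{‖z‖ = ρ} ‖P z‖`, which is (a) since `P γ = 1`. The polynomial `(z/γ)ⁿ` has
constant modulus `(ρ/‖γ‖)ⁿ` on the circle, giving (b).
-/

open Polynomial Metric Set

theorem Complex.norm_le_of_forall_mem_sphere_norm_le {F : Type*} [NormedAddCommGroup F]
    [NormedSpace ℂ F] {f : ℂ → F} (hf : Differentiable ℂ f) {c : ℂ} {r C : ℝ}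
    (hC : ∀ w ∈ sphere c r, ‖f w‖ ≤ C) {z : ℂ} (hz : z ∈ closedBall c r) : ‖f z‖ ≤ C := by
  rcases eq_or_ne r 0 with rfl | hr
  · rw [closedBall_zero, mem_singleton_iff] at hz
    exact hC z (by simp [hz])
  refine norm_le_of_forall_mem_frontier_norm_le (isBounded_ball (x := c) (r := r))
    hf.diffContOnCl ?_ ?_
  · rwa [frontier_ball c hr]
  · rwa [closure_ball c hr]

namespace Polynomial

theorem norm_eval_reflect_inv {K : Type*} [NormedField K] {P : K[X]} {n : ℕ}
    (hP : P.natDegree ≤ n) {w : K} (hw : w ≠ 0) :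
    ‖(reflect n P).eval w⁻¹‖ = ‖P.eval w‖ / ‖w‖ ^ n := by
  let := invertibleOfNonzero hw
  have h := eval₂_reflect_mul_pow (RingHom.id K) w n P hP
  rw [invOf_eq_inv, ← eval, ← eval] at h
  rw [← h, norm_mul, norm_pow, mul_div_cancel_right₀ _ (by positivity)]

theorem norm_eval_le_of_forall_mem_sphere {P : ℂ[X]} {n : ℕ} (hP : P.natDegree ≤ n) {ρ M : ℝ}
    (hρ : 0 < ρ) (hM : ∀ w ∈ sphere (0 : ℂ) ρ, ‖P.eval w‖ ≤ M) {z : ℂ} (hz : ρ ≤ ‖z‖) :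
    ‖P.eval z‖ ≤ (‖z‖ / ρ) ^ n * M := by
  have hz0 : 0 < ‖z‖ := hρ.trans_le hz
  have hreflect : ∀ w ∈ sphere (0 : ℂ) ρ⁻¹, ‖(reflect n P).eval w‖ ≤ M / ρ ^ n := by
    intro w hw
    rw [mem_sphere_zero_iff_norm] at hw
    have hw0 : w ≠ 0 := norm_ne_zero_iff.mp (by rw [hw]; positivity)
    rw [← inv_inv w, norm_eval_reflect_inv hP (inv_ne_zero hw0), norm_inv, hw, inv_inv]
    gcongr
    exact hM _ (by rw [mem_sphere_zero_iff_norm, norm_inv, hw, inv_inv])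
  have hzinv : z⁻¹ ∈ closedBall (0 : ℂ) ρ⁻¹ := by
    rw [mem_closedBall_zero_iff, norm_inv]
    exact inv_anti₀ hρ hz
  have key := Complex.norm_le_of_forall_mem_sphere_norm_le (reflect n P).differentiable hreflect
    hzinv
  rw [norm_eval_reflect_inv hP (norm_pos_iff.mp hz0), div_le_div_iff₀ (by positivity)
    (by positivity)] at key
  rw [div_pow, div_mul_eq_mul_div, le_div_iff₀ (by positivity)]
  linarith

theorem bddAbove_norm_eval_image_sphere (P : ℂ[X]) (c : ℂ) (ρ : ℝ) :
    BddAbove ((fun z => ‖P.eval z‖) '' sphere c ρ) :=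
  (isCompact_sphere c ρ).bddAbove_image P.continuous.norm.continuousOn

end Polynomial

/-- Let γ ∈ ℂ and ρ > 0 with |γ| ≥ ρ, and let n ∈ ℕ. Then:
(a) every complex polynomial P of degree at most n with P(γ) = 1 satisfies
sup_{|z| = ρ} |P(z)| ≥ (ρ/|γ|)^n; (b) the polynomial P(z) = (z/γ)^n satisfies P(γ) = 1 and
sup_{|z| = ρ} |P(z)| = (ρ/|γ|)^n, so the bound in (a) is attained. -/
theorem stmt_14
    (γ : ℂ) (ρ : ℝ) (hρ : 0 < ρ) (hγ : ρ ≤ ‖γ‖) (n : ℕ) :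
    (∀ P : Polynomial ℂ, P.degree ≤ n → P.eval γ = 1 →
      (ρ / ‖γ‖) ^ n ≤
        sSup ((fun z => ‖P.eval z‖) '' Metric.sphere (0 : ℂ) ρ)) ∧
    ((Polynomial.C γ⁻¹ * Polynomial.X : Polynomial ℂ) ^ n).eval γ = 1 ∧
    sSup ((fun z => ‖((Polynomial.C γ⁻¹ * Polynomial.X : Polynomial ℂ) ^ n).eval z‖)
        '' Metric.sphere (0 : ℂ) ρ)
      = (ρ / ‖γ‖) ^ n := by
  have hγ0 : 0 < ‖γ‖ := hρ.trans_le hγ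
  refine ⟨fun P hdeg hPγ => ?_, by simp [norm_pos_iff.mp hγ0], ?_⟩
  · have h := norm_eval_le_of_forall_mem_sphere (natDegree_le_iff_degree_le.mpr hdeg) hρ
      (fun w hw => le_csSup (bddAbove_norm_eval_image_sphere P 0 ρ) (mem_image_of_mem _ hw)) hγ
    rw [hPγ, norm_one, div_pow, div_mul_eq_mul_div, one_le_div (by positivity)] at h
    rwa [div_pow, div_le_iff₀ (by positivity), mul_comm]
  · have hconst : ∀ z ∈ sphere (0 : ℂ) ρ,
        ‖((C γ⁻¹ * X : ℂ[X]) ^ n).eval z‖ = (ρ / ‖γ‖) ^ n := fun z hz => by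
      rw [mem_sphere_zero_iff_norm] at hz
      simp [hz, div_eq_inv_mul]
    rw [image_congr hconst, (NormedSpace.sphere_nonempty.mpr hρ.le).image_const, csSup_singleton]
end

section
/- Let σ > 0 and define r : (0, 1] → ℝ by r(ρ) = 1/((σ²/2)·(log ρ)² + 1). Suppose ρ₁ is a real number with (−σ² + σ·√(σ² + 4))/2 < ρ₁ < 1, and set c := σ²·(1 − ρ₁)/ρ₁². Then 0 < c < 1 and |r(ρ) − r(ρ′)| ≤ c·|ρ − ρ′| for all ρ, ρ′ ∈ [ρ₁, 1]; in particular, r is a contraction on [ρ₁, 1]. -/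
set_option maxHeartbeats 1600000 in
/-- Let σ > 0 and r(ρ) = 1/((σ²/2)·(log ρ)² + 1). Suppose ρ₁ satisfies
(−σ² + σ·√(σ² + 4))/2 < ρ₁ < 1, and set c := σ²·(1 − ρ₁)/ρ₁². Then 0 < c < 1 and
|r(ρ) − r(ρ′)| ≤ c·|ρ − ρ′| for all ρ, ρ′ ∈ [ρ₁, 1]; in particular, r is a contraction
on [ρ₁, 1]. -/
theorem stmt_16
    (σ : ℝ) (hσ : 0 < σ)
    (r : ℝ → ℝ)
    (hr : ∀ ρ : ℝ, r ρ = 1 / (σ ^ 2 / 2 * (Real.log ρ) ^ 2 + 1))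
    (ρ₁ : ℝ)
    (hρ₁lo : (-σ ^ 2 + σ * Real.sqrt (σ ^ 2 + 4)) / 2 < ρ₁)
    (hρ₁hi : ρ₁ < 1)
    (c : ℝ) (hc : c = σ ^ 2 * (1 - ρ₁) / ρ₁ ^ 2) :
    0 < c ∧ c < 1 ∧
      ∀ ρ ∈ Set.Icc ρ₁ 1, ∀ ρ' ∈ Set.Icc ρ₁ 1, |r ρ - r ρ'| ≤ c * |ρ - ρ'| := by
  have hs2 : Real.sqrt (σ ^ 2 + 4) ^ 2 = σ ^ 2 + 4 := Real.sq_sqrt (by positivity)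
  have hsσ : σ < Real.sqrt (σ ^ 2 + 4) := by
    nlinarith [Real.sqrt_nonneg (σ ^ 2 + 4)]
  have hρ₁pos : 0 < ρ₁ := by nlinarith
  have hkey : σ ^ 2 * (1 - ρ₁) < ρ₁ ^ 2 := by
    have h1 : 0 < 2 * ρ₁ + σ ^ 2 - σ * Real.sqrt (σ ^ 2 + 4) := by linarith
    have h2 : 0 < 2 * ρ₁ + σ ^ 2 + σ * Real.sqrt (σ ^ 2 + 4) := by
      have := mul_nonneg hσ.le (Real.sqrt_nonneg (σ ^ 2 + 4))
      nlinarith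
    nlinarith [mul_pos h1 h2]
  have hc0 : 0 < c := by
    rw [hc]
    exact div_pos (mul_pos (by positivity) (by linarith)) (by positivity)
  have hc1 : c < 1 := by
    rw [hc, div_lt_one (by positivity)]; exact hkey
  refine ⟨hc0, hc1, ?_⟩
  have main : ∀ x ∈ Set.Icc ρ₁ 1, ∀ y ∈ Set.Icc ρ₁ 1, x ≤ y →
      |r x - r y| ≤ c * |x - y| := by
    intro x hx y hy hxy
    obtain ⟨hx1, hx2⟩ := hx
    obtain ⟨hy1, hy2⟩ := hy
    have hx0 : 0 < x := lt_of_lt_of_le hρ₁pos hx1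
    have hy0 : 0 < y := lt_of_lt_of_le hρ₁pos hy1
    have hLx0 : Real.log x ≤ 0 := Real.log_nonpos hx0.le hx2
    have hLy0 : Real.log y ≤ 0 := Real.log_nonpos hy0.le hy2
    have hLxy : Real.log x ≤ Real.log y := Real.log_le_log hx0 hxy
    -- |log y - log x| ≤ (y - x)/ρ₁
    have hdiff : Real.log y - Real.log x ≤ (y - x) / ρ₁ := by
      have h1 : Real.log (y / x) ≤ y / x - 1 :=
        Real.log_le_sub_one_of_pos (by positivity)
      rw [Real.log_div hy0.ne' hx0.ne'] at h1
      have h2 : y / x - 1 ≤ (y - x) / ρ₁ := by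
        rw [div_sub_one hx0.ne', div_le_div_iff₀ hx0 hρ₁pos]
        nlinarith
      linarith
    -- -log z ≤ (1-ρ₁)/ρ₁ on [ρ₁,1]
    have hbnd : ∀ z : ℝ, ρ₁ ≤ z → 0 < z → -Real.log z ≤ (1 - ρ₁) / ρ₁ := by
      intro z hz1 hz0
      have h1 : Real.log z⁻¹ ≤ z⁻¹ - 1 :=
        Real.log_le_sub_one_of_pos (by positivity)
      rw [Real.log_inv] at h1
      have h2 : z⁻¹ ≤ ρ₁⁻¹ := by
        apply inv_anti₀ hρ₁pos hz1
      have h3 : (1 - ρ₁) / ρ₁ = ρ₁⁻¹ - 1 := by field_simp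
      linarith
    have hbx : -Real.log x ≤ (1 - ρ₁) / ρ₁ := hbnd x hx1 hx0
    have hby : -Real.log y ≤ (1 - ρ₁) / ρ₁ := hbnd y hy1 hy0
    have hq : (0:ℝ) ≤ σ ^ 2 / 2 := by positivity
    have hDx1 : 1 ≤ σ ^ 2 / 2 * (Real.log x) ^ 2 + 1 := by
      nlinarith [mul_nonneg hq (sq_nonneg (Real.log x))]
    have hDy1 : 1 ≤ σ ^ 2 / 2 * (Real.log y) ^ 2 + 1 := by
      nlinarith [mul_nonneg hq (sq_nonneg (Real.log y))]
    have hL2 : (Real.log y) ^ 2 ≤ (Real.log x) ^ 2 := by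
      nlinarith [mul_nonneg (sub_nonneg.2 hLxy) (neg_nonneg.2 (add_nonpos hLx0 hLy0))]
    have hDle : σ ^ 2 / 2 * (Real.log y) ^ 2 + 1 ≤ σ ^ 2 / 2 * (Real.log x) ^ 2 + 1 := by
      nlinarith [mul_le_mul_of_nonneg_left hL2 hq]
    have hrle : r x ≤ r y := by
      rw [hr, hr]
      exact one_div_le_one_div_of_le (by linarith) hDle
    rw [abs_of_nonpos (by linarith), abs_of_nonpos (by linarith)]
    have hDx0 : (0:ℝ) < σ ^ 2 / 2 * (Real.log x) ^ 2 + 1 := by linarith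
    have hDy0 : (0:ℝ) < σ ^ 2 / 2 * (Real.log y) ^ 2 + 1 := by linarith
    have hfrac : r y - r x =
        ((σ ^ 2 / 2 * (Real.log x) ^ 2 + 1) - (σ ^ 2 / 2 * (Real.log y) ^ 2 + 1)) /
          ((σ ^ 2 / 2 * (Real.log x) ^ 2 + 1) * (σ ^ 2 / 2 * (Real.log y) ^ 2 + 1)) := by
      rw [hr, hr]
      field_simp
    have hB : ((σ ^ 2 / 2 * (Real.log x) ^ 2 + 1) - (σ ^ 2 / 2 * (Real.log y) ^ 2 + 1)) /
          ((σ ^ 2 / 2 * (Real.log x) ^ 2 + 1) * (σ ^ 2 / 2 * (Real.log y) ^ 2 + 1)) ≤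
        (σ ^ 2 / 2 * (Real.log x) ^ 2 + 1) - (σ ^ 2 / 2 * (Real.log y) ^ 2 + 1) :=
      div_le_self (by linarith) (by nlinarith)
    have hprod : (Real.log y - Real.log x) * (-Real.log x - Real.log y) ≤
        ((y - x) / ρ₁) * (2 * (1 - ρ₁) / ρ₁) := by
      have h2 : -Real.log x - Real.log y ≤ 2 * (1 - ρ₁) / ρ₁ := by
        have h3 : 2 * (1 - ρ₁) / ρ₁ = (1 - ρ₁) / ρ₁ + (1 - ρ₁) / ρ₁ := by ring
        linarith
      have h3 : (0:ℝ) ≤ (y - x) / ρ₁ := div_nonneg (by linarith) hρ₁pos.le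
      exact mul_le_mul hdiff h2 (by linarith) h3
    have hceq : c * (y - x) = σ ^ 2 / 2 * (((y - x) / ρ₁) * (2 * (1 - ρ₁) / ρ₁)) := by
      rw [hc]; field_simp
    have hfin : (σ ^ 2 / 2 * (Real.log x) ^ 2 + 1) - (σ ^ 2 / 2 * (Real.log y) ^ 2 + 1) ≤
        c * (y - x) := by
      have h4 : (σ ^ 2 / 2 * (Real.log x) ^ 2 + 1) - (σ ^ 2 / 2 * (Real.log y) ^ 2 + 1) =
          σ ^ 2 / 2 * ((Real.log y - Real.log x) * (-Real.log x - Real.log y)) := by ring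
      rw [h4, hceq]
      exact mul_le_mul_of_nonneg_left hprod hq
    have h5 : c * -(x - y) = c * (y - x) := by ring
    rw [h5]
    linarith [hfrac ▸ hB]
  intro ρ hρ ρ' hρ'
  rcases le_total ρ ρ' with h | h
  · exact main ρ hρ ρ' hρ' h
  · rw [abs_sub_comm (r ρ), abs_sub_comm ρ]
    exact main ρ' hρ' ρ hρ h
end
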